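/- arXiv:2001.02797 — 7 statements merged into one kernel-verified Lean document; each statement's English description precedes it below -/
import Mathlib

section
/- If X ~ Poisson(x) and Y ~ Poisson(y) are Poisson random variables on ℕ, then the total variation distance between their laws is at most 1 - exp(-|x-y|), and hence at most |x-y|. -/
/-!
For `x ≤ y` the two Poisson weights both dominate `exp (-y) * x ^ k / k!`, whose total mass
is `exp (x - y)`. Since `|p - q| = p + q - 2 min p q`, any common lower bound `m ≤ p, q` of two
probability vectors of total mass `s` gives `ρ_TV(p, q) ≤ 1 - s`.
-/

open scoped BigOperators

/-- Probability mass function of the Poisson distribution with parameter `x`. -/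
noncomputable def poiPMF (x : ℝ) (k : ℕ) : ℝ := Real.exp (-x) * x ^ k / (Nat.factorial k)

/-- Total variation distance between two laws on ℕ given by their pmfs. -/
noncomputable def tvDist (p q : ℕ → ℝ) : ℝ := (1 / 2) * ∑' k : ℕ, |p k - q k|

lemma tvDist_comm (p q : ℕ → ℝ) : tvDist p q = tvDist q p := by
  simp only [tvDist, abs_sub_comm]

lemma tvDist_le_one_sub_of_le {p q m : ℕ → ℝ} {s : ℝ} (hp : HasSum p 1) (hq : HasSum q 1)
    (hm : HasSum m s) (hmp : m ≤ p) (hmq : m ≤ q) : tvDist p q ≤ 1 - s := by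
  have hbound : ∀ k, |p k - q k| ≤ p k + q k - 2 * m k := fun k =>
    abs_sub_le_iff.2 ⟨by linarith [hmq k], by linarith [hmp k]⟩
  have hsum : HasSum (fun k => p k + q k - 2 * m k) (1 + 1 - 2 * s) :=
    (hp.add hq).sub (hm.mul_left 2)
  have hle : ∑' k, |p k - q k| ≤ 1 + 1 - 2 * s :=
    hsum.tsum_eq ▸ (hsum.summable.of_nonneg_of_le (fun k => abs_nonneg _) hbound).tsum_le_tsum
      hbound hsum.summable
  rw [tvDist]
  linarith

lemma hasSum_poiPMF (x : ℝ) : HasSum (poiPMF x) 1 := by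
  have h := (NormedSpace.expSeries_div_hasSum_exp x).mul_left (Real.exp (-x))
  rw [← Real.exp_eq_exp_ℝ, ← Real.exp_add, neg_add_cancel, Real.exp_zero] at h
  have hpmf : poiPMF x = fun k => Real.exp (-x) * (x ^ k / k.factorial) :=
    funext fun k => mul_div_assoc _ _ _
  rwa [hpmf]

lemma tvDist_poiPMF_le_of_le {x y : ℝ} (hx : 0 ≤ x) (hxy : x ≤ y) :
    tvDist (poiPMF x) (poiPMF y) ≤ 1 - Real.exp (x - y) := by
  have hoverlap :
      HasSum (fun k : ℕ => Real.exp (-y) * (x ^ k / k.factorial)) (Real.exp (x - y)) := by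
    rw [sub_eq_neg_add, Real.exp_add, Real.exp_eq_exp_ℝ]
    exact (NormedSpace.expSeries_div_hasSum_exp x).mul_left _
  refine tvDist_le_one_sub_of_le (hasSum_poiPMF x) (hasSum_poiPMF y) hoverlap
    (fun k => ?_) (fun k => ?_)
  · rw [poiPMF, mul_div_assoc]
    gcongr
  · rw [poiPMF, mul_div_assoc]
    gcongr

/-- If X ~ Poisson(x) and Y ~ Poisson(y), then
`ρ_TV(L(X), L(Y)) ≤ 1 - exp (-|x - y|) ≤ |x - y|`. -/
theorem stmt0 (x y : ℝ) (hx : 0 ≤ x) (hy : 0 ≤ y) :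
    tvDist (poiPMF x) (poiPMF y) ≤ 1 - Real.exp (-|x - y|) ∧
    tvDist (poiPMF x) (poiPMF y) ≤ |x - y| := by
  have hexp : tvDist (poiPMF x) (poiPMF y) ≤ 1 - Real.exp (-|x - y|) := by
    rcases le_total x y with hxy | hyx
    · rw [abs_of_nonpos (sub_nonpos.2 hxy), neg_neg]
      exact tvDist_poiPMF_le_of_le hx hxy
    · rw [abs_of_nonneg (sub_nonneg.2 hyx), neg_sub, tvDist_comm]
      exact tvDist_poiPMF_le_of_le hy hyx
  refine ⟨hexp, hexp.trans ?_⟩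
  linarith [Real.add_one_le_exp (-|x - y|)]
end

section
/- Let h : ℕ → ℝ and α > 0, and suppose E[|Δh(V)|] < ∞ for V ~ Poisson(α), where Δh(k) = h(k+1) - h(k). Then ĥ(x) = E[h(X)] for X ~ Poisson(x) is continuously differentiable on [0, α] with derivative ĥ'(x) = E[Δh(X)] = ∑_{k=0}^∞ (h(k+1) - h(k)) e^{-x} x^k / k!. -/
/-!
Writing `h k = h 0 + ∑ j < k, Δh j` and using `α ^ (j + m) / (j + m)! ≤ (α ^ j / j !) (α ^ m / m !)`,
the Cauchy product of `∑ |Δh j| α ^ j / j !` with `∑ α ^ m / m !` dominates `∑ |h k| α ^ k / k !`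
(and its shift by one). So on `|x| ≤ α` the series `∑ h k poiPMF x k` and its termwise derivative
`∑ h k (poiPMF x (k - 1) - poiPMF x k)` converge normally; on `(-α, α)` this gives the derivative,
which a shift of the summation index turns into `∑ Δh k poiPMF x k`. At the endpoint `α` the one-sided derivative
comes from continuity of the derivative up to the boundary.
-/

open scoped BigOperators

open Finset Set Filter Real
open scoped Nat Topology

lemma pow_div_factorial_add_le {α : ℝ} (hα : 0 ≤ α) (j m : ℕ) :
    α ^ (j + m) / (j + m)! ≤ α ^ j / j ! * (α ^ m / m !) := by
  rw [div_mul_div_comm, ← pow_add]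
  gcongr
  exact_mod_cast Nat.le_of_dvd (Nat.factorial_pos _)
    (Nat.factorial_mul_factorial_dvd_factorial_add j m)

/-- Dominated termwise by the Cauchy product of `∑ b j * (α ^ j / j !)` and `∑ α ^ m / m !`. -/
lemma summable_sum_range_mul_pow_div_factorial {α : ℝ} (hα : 0 ≤ α) {b : ℕ → ℝ}
    (hb : ∀ j, 0 ≤ b j) (hs : Summable fun j => b j * (α ^ j / j !)) :
    Summable fun n => (∑ j ∈ range (n + 1), b j) * (α ^ n / n !) := by
  have hq : Summable fun m => ‖α ^ m / (m ! : ℝ)‖ := by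
    simpa [abs_of_nonneg hα] using (Real.summable_pow_div_factorial α).norm
  refine (summable_norm_sum_mul_antidiagonal_of_summable_norm hs.norm hq).of_nonneg_of_le
    (fun n => mul_nonneg (sum_nonneg fun j _ => hb j) (by positivity)) fun n => ?_
  rw [← Nat.sum_antidiagonal_eq_sum_range_succ (fun j _ => b j), sum_mul]
  refine le_trans (sum_le_sum fun jm hjm => ?_) (Real.le_norm_self _)
  rw [← mem_antidiagonal.1 hjm, mul_assoc]
  exact mul_le_mul_of_nonneg_left (pow_div_factorial_add_le hα _ _) (hb _)

lemma abs_le_abs_zero_add_sum_abs_sub (h : ℕ → ℝ) (k : ℕ) :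
    |h k| ≤ |h 0| + ∑ j ∈ range k, |h (j + 1) - h j| := by
  calc |h k| = |h 0 + ∑ j ∈ range k, (h (j + 1) - h j)| := by
        rw [sum_range_sub]; ring_nf
    _ ≤ |h 0| + ∑ j ∈ range k, |h (j + 1) - h j| :=
        (abs_add_le _ _).trans (by gcongr; exact abs_sum_le_sum_abs _ _)

lemma summable_abs_mul_pow_div_factorial_of_le_succ {h : ℕ → ℝ} {α : ℝ} (hα : 0 ≤ α)
    (hΔ : Summable fun k => |h (k + 1) - h k| * (α ^ k / k !)) {s : ℕ → ℕ}
    (hs : ∀ k, s k ≤ k + 1) : Summable fun k => |h (s k)| * (α ^ k / k !) := by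
  have hmajor : Summable fun k =>
      (|h 0| + ∑ j ∈ range (k + 1), |h (j + 1) - h j|) * (α ^ k / k !) := by
    simp_rw [add_mul]
    exact ((Real.summable_pow_div_factorial α).mul_left _).add
      (summable_sum_range_mul_pow_div_factorial hα (fun _ => abs_nonneg _) hΔ)
  refine hmajor.of_nonneg_of_le (fun k => by positivity) fun k => ?_
  gcongr
  exact (abs_le_abs_zero_add_sum_abs_sub h (s k)).trans (by gcongr; exact hs k)

section PoissonSeries

variable {α x : ℝ}

lemma poiPMF_eq (x : ℝ) (k : ℕ) : poiPMF x k = exp (-x) * (x ^ k / k !) :=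
  mul_div_assoc _ _ _

lemma continuous_poiPMF (k : ℕ) : Continuous fun x => poiPMF x k := by
  unfold poiPMF
  fun_prop

lemma abs_poiPMF_le (hx : |x| ≤ α) (k : ℕ) : |poiPMF x k| ≤ exp α * (α ^ k / k !) := by
  rw [poiPMF_eq, abs_mul, abs_exp, abs_div, abs_pow, Nat.abs_cast]
  gcongr
  exact (neg_le_abs x).trans hx

lemma abs_mul_poiPMF_le (hx : |x| ≤ α) (c : ℝ) (k : ℕ) :
    |c * poiPMF x k| ≤ exp α * (|c| * (α ^ k / k !)) := by
  rw [abs_mul, mul_left_comm]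
  exact mul_le_mul_of_nonneg_left (abs_poiPMF_le hx k) (abs_nonneg c)

lemma summable_mul_poiPMF {f : ℕ → ℝ} (hf : Summable fun k => |f k| * (α ^ k / k !))
    (hx : |x| ≤ α) : Summable fun k => f k * poiPMF x k :=
  .of_norm_bounded (hf.mul_left (exp α)) fun k => abs_mul_poiPMF_le hx (f k) k

lemma continuousOn_tsum_mul_poiPMF {f : ℕ → ℝ} (hf : Summable fun k => |f k| * (α ^ k / k !)) :
    ContinuousOn (fun x => ∑' k, f k * poiPMF x k) (Icc (-α) α) :=
  continuousOn_tsum (fun k => ((continuous_poiPMF k).const_smul (f k)).continuousOn)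
    (hf.mul_left (exp α)) fun k _ hx => abs_mul_poiPMF_le (abs_le.2 hx) (f k) k

noncomputable def poiPMFDeriv (x : ℝ) : ℕ → ℝ
  | 0 => -poiPMF x 0
  | k + 1 => poiPMF x k - poiPMF x (k + 1)

lemma hasDerivAt_poiPMF (x : ℝ) (k : ℕ) :
    HasDerivAt (fun z => poiPMF z k) (poiPMFDeriv x k) x := by
  have hexp : HasDerivAt (fun z => exp (-z)) (-exp (-x)) x := by
    simpa using (hasDerivAt_neg x).exp
  cases k with
  | zero => simpa [poiPMF, poiPMFDeriv] using hexp
  | succ k =>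
    have := (hexp.mul (hasDerivAt_pow (k + 1) x)).div_const ((k + 1)! : ℝ)
    refine this.congr_deriv ?_
    simp only [poiPMFDeriv, poiPMF, Nat.factorial_succ, Nat.cast_mul, Nat.add_sub_cancel]
    field_simp
    push_cast
    ring

lemma abs_poiPMFDeriv_le (hx : |x| ≤ α) (k : ℕ) :
    |poiPMFDeriv x k| ≤ exp α * (α ^ k / k ! + α ^ (k - 1) / (k - 1)!) := by
  cases k with
  | zero =>
    rw [poiPMFDeriv, abs_neg, mul_add]
    have hα : 0 ≤ α := (abs_nonneg x).trans hx
    exact (abs_poiPMF_le hx 0).trans (le_add_of_nonneg_right (by positivity))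
  | succ k =>
    rw [poiPMFDeriv, Nat.add_sub_cancel, mul_add]
    exact (abs_sub _ _).trans <|
      (add_le_add (abs_poiPMF_le hx k) (abs_poiPMF_le hx (k + 1))).trans_eq (add_comm _ _)

lemma tsum_mul_poiPMFDeriv {f : ℕ → ℝ} (h₀ : Summable fun k => f k * poiPMF x k)
    (h₁ : Summable fun k => f (k + 1) * poiPMF x k) :
    ∑' k, f k * poiPMFDeriv x k = ∑' k, (f (k + 1) - f k) * poiPMF x k := by
  have h₀' : Summable fun k => f (k + 1) * poiPMF x (k + 1) :=
    (summable_nat_add_iff 1).2 h₀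
  have hD : Summable fun k => f (k + 1) * poiPMFDeriv x (k + 1) :=
    (h₁.sub h₀').congr fun k => (mul_sub _ _ _).symm
  rw [tsum_eq_zero_add' (f := fun k => f k * poiPMFDeriv x k) hD,
    tsum_congr fun k => sub_mul _ _ _, h₁.tsum_sub h₀, h₀.tsum_eq_zero_add]
  simp only [poiPMFDeriv, mul_sub]
  rw [h₁.tsum_sub h₀']
  ring

lemma hasDerivAt_tsum_mul_poiPMF {f : ℕ → ℝ} (h₀ : Summable fun k => |f k| * (α ^ k / k !))
    (h₁ : Summable fun k => |f (k + 1)| * (α ^ k / k !)) (hx : x ∈ Ioo (-α) α) :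
    HasDerivAt (fun z => ∑' k, f k * poiPMF z k) (∑' k, (f (k + 1) - f k) * poiPMF x k) x := by
  have hx' : |x| ≤ α := abs_le.2 ⟨hx.1.le, hx.2.le⟩
  have hmajor : Summable fun k =>
      exp α * (|f k| * (α ^ k / k !) + |f k| * (α ^ (k - 1) / (k - 1)!)) :=
    (h₀.add ((summable_nat_add_iff 1).1 h₁)).mul_left _
  rw [← tsum_mul_poiPMFDeriv (summable_mul_poiPMF h₀ hx') (summable_mul_poiPMF h₁ hx')]
  refine hasDerivAt_tsum_of_isPreconnected hmajor isOpen_Ioo isPreconnected_Ioo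
    (fun k y _ => (hasDerivAt_poiPMF y k).const_mul (f k)) (fun k y hy => ?_) hx
    (summable_mul_poiPMF h₀ hx') hx
  rw [norm_mul, Real.norm_eq_abs, Real.norm_eq_abs, ← mul_add, mul_left_comm]
  exact mul_le_mul_of_nonneg_left (abs_poiPMFDeriv_le (abs_le.2 ⟨hy.1.le, hy.2.le⟩) k)
    (abs_nonneg _)

end PoissonSeries

lemma hasDerivWithinAt_Iic_of_hasDerivAt_Ioo {E : Type*} [NormedAddCommGroup E]
    [NormedSpace ℝ E] {f f' : ℝ → E} {a b : ℝ} (hab : a < b)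
    (hderiv : ∀ y ∈ Ioo a b, HasDerivAt f (f' y) y) (hf : ContinuousWithinAt f (Icc a b) b)
    (hf' : ContinuousWithinAt f' (Icc a b) b) : HasDerivWithinAt f (f' b) (Iic b) b := by
  refine hasDerivWithinAt_Iic_of_tendsto_deriv
    (fun y hy => (hderiv y hy).differentiableAt.differentiableWithinAt)
    (hf.mono Ioo_subset_Icc_self) (Ioo_mem_nhdsLT hab) ?_
  have hlim : Tendsto f' (𝓝[<] b) (𝓝 (f' b)) := by
    rw [← nhdsWithin_Ioo_eq_nhdsLT hab]
    exact (hf'.mono Ioo_subset_Icc_self).tendsto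
  exact hlim.congr' <|
    eventuallyEq_of_mem (Ioo_mem_nhdsLT hab) fun y hy => (hderiv y hy).deriv.symm

/-- If `E[|Δh(V)|] < ∞` for `V ~ Poisson(α)`, then `ĥ(x) = E[h(X)]`, `X ~ Poisson(x)`, is
continuously differentiable on `[0, α]` with derivative `ĥ'(x) = E[Δh(X)]`. -/
theorem stmt4 (h : ℕ → ℝ) (α : ℝ) (hα : 0 < α)
    (hsum : Summable fun k => |h (k + 1) - h k| * poiPMF α k) :
    (∀ x ∈ Set.Icc (0 : ℝ) α,
      HasDerivWithinAt (fun z : ℝ => ∑' k : ℕ, h k * poiPMF z k)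
        (∑' k : ℕ, (h (k + 1) - h k) * poiPMF x k) (Set.Icc 0 α) x) ∧
    ContinuousOn (fun x : ℝ => ∑' k : ℕ, (h (k + 1) - h k) * poiPMF x k) (Set.Icc 0 α) := by
  have hΔ : Summable fun k => |h (k + 1) - h k| * (α ^ k / k !) := by
    refine (summable_mul_left_iff (exp_ne_zero (-α))).1 (hsum.congr fun k => ?_)
    rw [poiPMF_eq, mul_left_comm]
  have h₀ := summable_abs_mul_pow_div_factorial_of_le_succ hα.le hΔ (s := id) Nat.le_succ
  have h₁ := summable_abs_mul_pow_div_factorial_of_le_succ hα.le hΔ (s := (· + 1)) fun _ => le_rfl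
  have hderiv : ∀ x ∈ Ioo (-α) α, HasDerivAt (fun z => ∑' k, h k * poiPMF z k)
      (∑' k, (h (k + 1) - h k) * poiPMF x k) x :=
    fun x hx => hasDerivAt_tsum_mul_poiPMF h₀ h₁ hx
  have hcont := continuousOn_tsum_mul_poiPMF hΔ
  refine ⟨fun x hx => ?_, hcont.mono (Icc_subset_Icc_left (by linarith))⟩
  rcases hx.2.eq_or_lt with hxα | hxα
  · have hα' : α ∈ Icc (-α) α := ⟨by linarith, le_rfl⟩
    rw [hxα]
    exact (hasDerivWithinAt_Iic_of_hasDerivAt_Ioo (by linarith) hderiv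
      (continuousOn_tsum_mul_poiPMF h₀ α hα') (hcont α hα')).mono Icc_subset_Iic_self
  · exact (hderiv x ⟨by linarith [hx.1], hxα⟩).hasDerivWithinAt
end

section
/- For h : ℕ → ℝ and X ~ Poisson(x) with x > 0 and j ≥ 1, the following are equivalent: (i) E[|Δʲh(X)|] < ∞; (ii) E[|h(X + j)|] < ∞; (iii) E[Xʲ |h(X)|] < ∞. -/
open scoped BigOperators

/-- Forward difference operator `Δh(k) = h(k+1) - h(k)`. -/
noncomputable def fdiff (h : ℕ → ℝ) : ℕ → ℝ := fun k => h (k + 1) - h k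

/-!
Two facts about the Poisson weights `p k = e^{-x} x^k / k!` carry the argument: the tail bound
`∑_{k ≥ m} p k ≤ e^x p m` (from `m! t! ≤ (m + t)!`) and the identity
`(k + j)(k + j - 1)⋯(k + 1) p (k + j) = x^j p k`.

Writing `f (k + 1) = f 0 + ∑_{m ≤ k} Δf m` and exchanging the order of summation, the tail bound
gives `E|f(X + 1)| ≤ |f 0| + e^x E|Δf(X)|`; conversely `|Δf| ≤ |f (· + 1)| + |f|` and
`p (k + 1) ≤ x p k`. So `E|Δf(X)| < ∞ ↔ E|f(X + 1)| < ∞`, and induction on `j` gives (i) ↔ (ii).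
The identity turns `E|h(X + j)|` into `x^{-j} E[X(X - 1)⋯(X - j + 1) |h(X)|]`, and the falling
factorial is comparable to `X^j` for large `X`, which gives (ii) ↔ (iii).
-/

open Finset

lemma Nat.pow_le_two_pow_mul_descFactorial {n j : ℕ} (hn : 2 * j ≤ n) :
    n ^ j ≤ 2 ^ j * n.descFactorial j :=
  calc n ^ j ≤ (2 * (n + 1 - j)) ^ j := Nat.pow_le_pow_left (by omega) j
    _ = 2 ^ j * (n + 1 - j) ^ j := mul_pow _ _ _
    _ ≤ 2 ^ j * n.descFactorial j := Nat.mul_le_mul_left _ (Nat.pow_sub_le_descFactorial n j)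

lemma summable_descFactorial_mul_iff {u : ℕ → ℝ} (hu : ∀ n, 0 ≤ u n) (j : ℕ) :
    Summable (fun n => (n.descFactorial j : ℝ) * u n) ↔
      Summable fun n : ℕ => (n : ℝ) ^ j * u n := by
  constructor
  · intro H
    refine Summable.of_norm_bounded_eventually_nat (H.mul_left (2 ^ j)) ?_
    filter_upwards [Filter.eventually_ge_atTop (2 * j)] with n hn
    have hpow : (n : ℝ) ^ j ≤ 2 ^ j * n.descFactorial j := by
      exact_mod_cast Nat.pow_le_two_pow_mul_descFactorial hn
    rw [Real.norm_of_nonneg (by have := hu n; positivity), ← mul_assoc]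
    exact mul_le_mul_of_nonneg_right hpow (hu n)
  · refine fun H => H.of_nonneg_of_le (fun n => by have := hu n; positivity) fun n => ?_
    have hdesc : (n.descFactorial j : ℝ) ≤ (n : ℝ) ^ j := by
      exact_mod_cast Nat.descFactorial_le_pow n j
    exact mul_le_mul_of_nonneg_right hdesc (hu n)

lemma abs_le_abs_zero_add_sum_abs_fdiff (f : ℕ → ℝ) (n : ℕ) :
    |f n| ≤ |f 0| + ∑ m ∈ range n, |fdiff f m| := by
  have htel : f n = f 0 + ∑ m ∈ range n, fdiff f m := by
    rw [show ∑ m ∈ range n, fdiff f m = f n - f 0 from sum_range_sub f n]; ring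
  calc |f n| ≤ |f 0| + |∑ m ∈ range n, fdiff f m| := htel ▸ abs_add_le _ _
    _ ≤ |f 0| + ∑ m ∈ range n, |fdiff f m| := by gcongr; exact abs_sum_le_sum_abs _ _

lemma fdiff_comp_add_right (f : ℕ → ℝ) (j k : ℕ) :
    fdiff (fun k => f (k + j)) k = fdiff f (k + j) := by
  simp only [fdiff, add_right_comm]

section Poisson

variable {x : ℝ}

lemma poiPMF_nonneg (hx : 0 ≤ x) (k : ℕ) : 0 ≤ poiPMF x k := by
  unfold poiPMF; positivity

lemma descFactorial_mul_poiPMF_add (x : ℝ) (k j : ℕ) :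
    ((k + j).descFactorial j : ℝ) * poiPMF x (k + j) = x ^ j * poiPMF x k := by
  have hfac : ((k + j).factorial : ℝ) = k.factorial * (k + j).descFactorial j := by
    have := Nat.factorial_mul_descFactorial (Nat.le_add_left j k)
    rw [Nat.add_sub_cancel] at this
    exact_mod_cast this.symm
  have hk : (k.factorial : ℝ) ≠ 0 := by positivity
  have hdesc : ((k + j).descFactorial j : ℝ) ≠ 0 := by
    exact_mod_cast (Nat.descFactorial_pos.mpr (Nat.le_add_left j k)).ne'
  unfold poiPMF
  rw [hfac, pow_add]
  field_simp

lemma poiPMF_add_le (hx : 0 ≤ x) (m t : ℕ) :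
    poiPMF x (m + t) ≤ poiPMF x m * (x ^ t / t.factorial) := by
  have hfac : (m.factorial * t.factorial : ℝ) ≤ (m + t).factorial := by
    exact_mod_cast Nat.le_of_dvd (Nat.factorial_pos _)
      (Nat.factorial_mul_factorial_dvd_factorial_add m t)
  calc poiPMF x (m + t) = Real.exp (-x) * x ^ m * x ^ t / (m + t).factorial := by
        rw [poiPMF, pow_add, mul_assoc]
    _ ≤ Real.exp (-x) * x ^ m * x ^ t / (m.factorial * t.factorial) := by
        gcongr
    _ = poiPMF x m * (x ^ t / t.factorial) := by
        rw [poiPMF, mul_div_mul_comm]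

lemma poiPMF_succ_le (hx : 0 ≤ x) (k : ℕ) : poiPMF x (k + 1) ≤ x * poiPMF x k := by
  simpa [mul_comm] using poiPMF_add_le hx k 1

lemma sum_Ico_poiPMF_le (hx : 0 ≤ x) (m n : ℕ) :
    ∑ k ∈ Ico m n, poiPMF x k ≤ Real.exp x * poiPMF x m := by
  rw [sum_Ico_eq_sum_range]
  calc ∑ t ∈ range (n - m), poiPMF x (m + t)
      ≤ ∑ t ∈ range (n - m), poiPMF x m * (x ^ t / t.factorial) :=
        sum_le_sum fun t _ => poiPMF_add_le hx m t
    _ = poiPMF x m * ∑ t ∈ range (n - m), x ^ t / t.factorial := (mul_sum _ _ _).symm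
    _ ≤ poiPMF x m * Real.exp x :=
        mul_le_mul_of_nonneg_left (Real.sum_le_exp_of_nonneg hx _) (poiPMF_nonneg hx m)
    _ = Real.exp x * poiPMF x m := mul_comm _ _

lemma summable_shift_of_summable_fdiff (hx : 0 ≤ x) (f : ℕ → ℝ)
    (H : Summable fun k => |fdiff f k| * poiPMF x k) :
    Summable fun k => |f (k + 1)| * poiPMF x k := by
  have hp := poiPMF_nonneg hx
  refine summable_of_sum_range_le (fun k => mul_nonneg (abs_nonneg _) (hp k))
    (c := |f 0| * (Real.exp x * poiPMF x 0) + Real.exp x * ∑' m, |fdiff f m| * poiPMF x m)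
    fun n => ?_
  have htotal : ∑ k ∈ range n, poiPMF x k ≤ Real.exp x * poiPMF x 0 := by
    rw [range_eq_Ico]; exact sum_Ico_poiPMF_le hx 0 n
  have hswap : ∑ k ∈ range n, ∑ m ∈ range (k + 1), |fdiff f m| * poiPMF x k
      = ∑ m ∈ range n, |fdiff f m| * ∑ k ∈ Ico m n, poiPMF x k := by
    simp only [range_eq_Ico, mul_sum]
    exact (sum_Ico_Ico_comm 0 n fun m k => |fdiff f m| * poiPMF x k).symm
  calc ∑ k ∈ range n, |f (k + 1)| * poiPMF x k
      ≤ ∑ k ∈ range n, (|f 0| + ∑ m ∈ range (k + 1), |fdiff f m|) * poiPMF x k :=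
        sum_le_sum fun k _ => mul_le_mul_of_nonneg_right
          (abs_le_abs_zero_add_sum_abs_fdiff f (k + 1)) (hp k)
    _ = |f 0| * ∑ k ∈ range n, poiPMF x k
        + ∑ m ∈ range n, |fdiff f m| * ∑ k ∈ Ico m n, poiPMF x k := by
        rw [← hswap]; simp only [add_mul, sum_add_distrib, mul_sum, sum_mul]
    _ ≤ |f 0| * (Real.exp x * poiPMF x 0)
        + ∑ m ∈ range n, |fdiff f m| * (Real.exp x * poiPMF x m) := by
        gcongr with m
        exact sum_Ico_poiPMF_le hx m n
    _ = |f 0| * (Real.exp x * poiPMF x 0)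
        + Real.exp x * ∑ m ∈ range n, |fdiff f m| * poiPMF x m := by
        rw [mul_sum]; congr 1; exact sum_congr rfl fun m _ => by ring
    _ ≤ |f 0| * (Real.exp x * poiPMF x 0) + Real.exp x * ∑' m, |fdiff f m| * poiPMF x m := by
        gcongr
        exact H.sum_le_tsum _ fun m _ => mul_nonneg (abs_nonneg _) (hp m)

lemma summable_of_summable_shift (hx : 0 ≤ x) (f : ℕ → ℝ)
    (H : Summable fun k => |f (k + 1)| * poiPMF x k) :
    Summable fun k => |f k| * poiPMF x k := by
  rw [← summable_nat_add_iff 1]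
  refine (H.mul_left x).of_nonneg_of_le
    (fun k => mul_nonneg (abs_nonneg _) (poiPMF_nonneg hx _)) fun k => ?_
  calc |f (k + 1)| * poiPMF x (k + 1) ≤ |f (k + 1)| * (x * poiPMF x k) :=
        mul_le_mul_of_nonneg_left (poiPMF_succ_le hx k) (abs_nonneg _)
    _ = x * (|f (k + 1)| * poiPMF x k) := by ring

lemma summable_fdiff_iff (hx : 0 ≤ x) (f : ℕ → ℝ) :
    Summable (fun k => |fdiff f k| * poiPMF x k) ↔
      Summable fun k => |f (k + 1)| * poiPMF x k := by
  refine ⟨summable_shift_of_summable_fdiff hx f, fun H => ?_⟩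
  refine (H.add (summable_of_summable_shift hx f H)).of_nonneg_of_le
    (fun k => mul_nonneg (abs_nonneg _) (poiPMF_nonneg hx _)) fun k => ?_
  rw [← add_mul]
  exact mul_le_mul_of_nonneg_right (abs_sub _ _) (poiPMF_nonneg hx _)

lemma summable_fdiff_iterate_iff (hx : 0 ≤ x) (j : ℕ) (h : ℕ → ℝ) :
    Summable (fun k => |(fdiff^[j] h) k| * poiPMF x k) ↔
      Summable fun k => |h (k + j)| * poiPMF x k := by
  induction j generalizing h with
  | zero => simp
  | succ j ih =>
    have hstep := summable_fdiff_iff hx (fun k => h (k + j))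
    simp only [fdiff_comp_add_right, add_right_comm _ 1 j, add_assoc] at hstep
    rw [Function.iterate_succ_apply, ih (fdiff h), hstep]

lemma summable_shift_iff_summable_pow_mul (hx : 0 < x) (h : ℕ → ℝ) (j : ℕ) :
    Summable (fun k => |h (k + j)| * poiPMF x k) ↔
      Summable fun k : ℕ => (k : ℝ) ^ j * |h k| * poiPMF x k := by
  have hterm : ∀ k, ((k + j).descFactorial j : ℝ) * (|h (k + j)| * poiPMF x (k + j))
      = x ^ j * (|h (k + j)| * poiPMF x k) := fun k => by
    rw [mul_left_comm, descFactorial_mul_poiPMF_add, mul_left_comm]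
  rw [← summable_mul_left_iff (pow_ne_zero j hx.ne'), ← funext hterm,
    summable_nat_add_iff (f := fun n => (n.descFactorial j : ℝ) * (|h n| * poiPMF x n)) j,
    summable_descFactorial_mul_iff (fun n => mul_nonneg (abs_nonneg _) (poiPMF_nonneg hx.le n))]
  simp only [mul_assoc]

end Poisson

theorem stmt7_general (h : ℕ → ℝ) (x : ℝ) (hx : 0 < x) (j : ℕ) :
    (Summable (fun k => |(fdiff^[j] h) k| * poiPMF x k) ↔
      Summable fun k => |h (k + j)| * poiPMF x k) ∧
    (Summable (fun k => |h (k + j)| * poiPMF x k) ↔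
      Summable fun (k : ℕ) => (k : ℝ) ^ j * |h k| * poiPMF x k) :=
  ⟨summable_fdiff_iterate_iff hx.le j h, summable_shift_iff_summable_pow_mul hx h j⟩

/-- For `X ~ Poisson(x)` with `x > 0` and `j ≥ 1`, the following are equivalent:
`E[|Δʲh(X)|] < ∞`, `E[|h(X + j)|] < ∞`, and `E[Xʲ |h(X)|] < ∞`. -/
theorem stmt7 (h : ℕ → ℝ) (x : ℝ) (hx : 0 < x) (j : ℕ) (hj : 1 ≤ j) :
    (Summable (fun k => |(fdiff^[j] h) k| * poiPMF x k) ↔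
      Summable fun k => |h (k + j)| * poiPMF x k) ∧
    (Summable (fun k => |h (k + j)| * poiPMF x k) ↔
      Summable fun (k : ℕ) => (k : ℝ) ^ j * |h k| * poiPMF x k) :=
  stmt7_general h x hx j
end

section
/- Consider a nonatomic congestion game on a finite resource set E with weakly increasing, differentiable costs c_e satisfying c_e'(x) ≥ β > 0 on [0, α], total demand d_tot ≤ α, and a Wardrop equilibrium (ŷ, x̂). If (y, x) is a feasible flow-load pair that is an ε-approximate Wardrop equilibrium, then the Euclidean distance of the load vectors satisfies ‖x - x̂‖₂ ≤ √(ε α / β). -/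
open scoped BigOperators Classical

variable {E T : Type*}

/-- A feasible flow-load pair for a nonatomic congestion game with strategy sets `strat` and
demands `d`: flows are nonnegative, supported on feasible strategies, route the demand of each
type, and induce the resource loads `x`. -/
def Feasible [Fintype E] [Fintype T] (strat : T → Finset (Finset E)) (d : T → ℝ)
    (y : T → Finset E → ℝ) (x : E → ℝ) : Prop :=
  (∀ t s, 0 ≤ y t s) ∧ (∀ t s, s ∉ strat t → y t s = 0) ∧
  (∀ t, d t = ∑ s ∈ strat t, y t s) ∧
  (∀ e, x e = ∑ t, ∑ s ∈ strat t, if e ∈ s then y t s else 0)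

/-- An `ε`-approximate Wardrop equilibrium: a feasible flow-load pair such that every used
strategy has cost within `ε` of the minimum. A Wardrop equilibrium is the case `ε = 0`. -/
def IsEpsWE [Fintype E] [Fintype T] (strat : T → Finset (Finset E)) (c : E → ℝ → ℝ)
    (d : T → ℝ) (ε : ℝ) (y : T → Finset E → ℝ) (x : E → ℝ) : Prop :=
  Feasible strat d y x ∧
  ∀ t, ∀ s ∈ strat t, ∀ s' ∈ strat t, 0 < y t s →
    ∑ e ∈ s, c e (x e) ≤ (∑ e ∈ s', c e (x e)) + ε

/-!
Both equilibria are tested against each other: using the other flow as a deviation in the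
(approximate) equilibrium conditions gives the variational inequalities
`⟨c(x), x - x̂⟩ ≤ ε d_tot` and `⟨c(x̂), x̂ - x⟩ ≤ 0`. Their sum bounds `⟨c(x) - c(x̂), x - x̂⟩`,
while the derivative bound makes each `c_e` strongly monotone on `[0, α]`, so that
`β ‖x - x̂‖² ≤ ⟨c(x) - c(x̂), x - x̂⟩ ≤ ε α`.
-/

section StrongMonotone

variable {D : Set ℝ} {f : ℝ → ℝ} {β : ℝ}

theorem Convex.mul_sub_le_image_sub_of_le_hasDerivWithinAt (hD : Convex ℝ D)
    (hf : ∀ z ∈ D, ∃ dz, HasDerivWithinAt f dz D z ∧ β ≤ dz) {a b : ℝ} (ha : a ∈ D) (hb : b ∈ D)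
    (hab : a ≤ b) : β * (b - a) ≤ f b - f a := by
  have hderivAt : ∀ z ∈ interior D, ∃ dz, HasDerivAt f dz z ∧ β ≤ dz := fun z hz => by
    obtain ⟨dz, hdz, hβdz⟩ := hf z (interior_subset hz)
    exact ⟨dz, hdz.hasDerivAt (mem_interior_iff_mem_nhds.mp hz), hβdz⟩
  refine hD.mul_sub_le_image_sub_of_le_deriv (fun z hz => ?_) (fun z hz => ?_) (fun z hz => ?_)
    a ha b hb hab
  · obtain ⟨dz, hdz, -⟩ := hf z hz
    exact hdz.continuousWithinAt
  · obtain ⟨dz, hdz, -⟩ := hderivAt z hz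
    exact hdz.differentiableAt.differentiableWithinAt
  · obtain ⟨dz, hdz, hβdz⟩ := hderivAt z hz
    rwa [hdz.deriv]

theorem Convex.mul_sq_sub_le_of_le_hasDerivWithinAt (hD : Convex ℝ D)
    (hf : ∀ z ∈ D, ∃ dz, HasDerivWithinAt f dz D z ∧ β ≤ dz) {a b : ℝ} (ha : a ∈ D) (hb : b ∈ D) :
    β * (b - a) ^ 2 ≤ (f b - f a) * (b - a) := by
  rcases le_total a b with hab | hba
  · have hgrowth := hD.mul_sub_le_image_sub_of_le_hasDerivWithinAt hf ha hb hab
    nlinarith [sub_nonneg.mpr hab]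
  · have hgrowth := hD.mul_sub_le_image_sub_of_le_hasDerivWithinAt hf hb ha hba
    nlinarith [sub_nonneg.mpr hba]

end StrongMonotone

section CongestionGame

variable [Fintype E] [Fintype T] {strat : T → Finset (Finset E)} {c : E → ℝ → ℝ} {d : T → ℝ}
  {ε : ℝ} {y : T → Finset E → ℝ} {x : E → ℝ}

namespace Feasible

theorem sum_mul_load (h : Feasible strat d y x) (w : E → ℝ) :
    ∑ e, w e * x e = ∑ t, ∑ s ∈ strat t, y t s * ∑ e ∈ s, w e := by
  calc ∑ e, w e * x e
      = ∑ e, ∑ t, ∑ s ∈ strat t, if e ∈ s then w e * y t s else 0 := by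
        simp only [h.2.2.2, Finset.mul_sum, mul_ite, mul_zero]
    _ = ∑ t, ∑ s ∈ strat t, ∑ e, if e ∈ s then w e * y t s else 0 := by
        rw [Finset.sum_comm]
        exact Finset.sum_congr rfl fun t _ => Finset.sum_comm
    _ = ∑ t, ∑ s ∈ strat t, y t s * ∑ e ∈ s, w e := by
        simp only [Finset.sum_ite_mem, Finset.univ_inter, Finset.mul_sum, mul_comm]

theorem load_nonneg (h : Feasible strat d y x) (e : E) : 0 ≤ x e := by
  rw [h.2.2.2 e]
  exact Finset.sum_nonneg fun t _ => Finset.sum_nonneg fun s _ => by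
    split_ifs
    exacts [h.1 t s, le_rfl]

theorem load_le_sum_demand (h : Feasible strat d y x) (e : E) : x e ≤ ∑ t, d t := by
  rw [h.2.2.2 e]
  refine Finset.sum_le_sum fun t _ => ?_
  rw [h.2.2.1 t]
  exact Finset.sum_le_sum fun s _ => by
    split_ifs
    exacts [le_rfl, h.1 t s]

end Feasible

namespace IsEpsWE

theorem type_cost_le (hap : IsEpsWE strat c d ε y x) {y' : T → Finset E → ℝ} {x' : E → ℝ}
    (hfe' : Feasible strat d y' x') (t : T) :
    ∑ s ∈ strat t, y t s * ∑ e ∈ s, c e (x e)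
      ≤ ∑ s ∈ strat t, y' t s * ∑ e ∈ s, c e (x e) + ε * d t := by
  obtain ⟨hfe, hnear⟩ := hap
  set cost : Finset E → ℝ := fun s => ∑ e ∈ s, c e (x e)
  rcases (strat t).eq_empty_or_nonempty with hempty | hne
  · simp [hempty, hfe.2.2.1 t]
  obtain ⟨s₀, hs₀, hmin⟩ := (strat t).exists_min_image cost hne
  calc ∑ s ∈ strat t, y t s * cost s
      ≤ ∑ s ∈ strat t, y t s * (cost s₀ + ε) := Finset.sum_le_sum fun s hs => by
        rcases (hfe.1 t s).lt_or_eq with hpos | hzero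
        · exact mul_le_mul_of_nonneg_left (hnear t s hs s₀ hs₀ hpos) hpos.le
        · simp [← hzero]
    _ = d t * cost s₀ + ε * d t := by
        rw [← Finset.sum_mul, ← hfe.2.2.1 t]
        ring
    _ ≤ ∑ s ∈ strat t, y' t s * cost s + ε * d t := by
        rw [hfe'.2.2.1 t, Finset.sum_mul]
        gcongr with s hs
        exacts [hfe'.1 t s, hmin s hs]

theorem variational_ineq (hap : IsEpsWE strat c d ε y x) {y' : T → Finset E → ℝ}
    {x' : E → ℝ} (hfe' : Feasible strat d y' x') :
    ∑ e, c e (x e) * x e ≤ ∑ e, c e (x e) * x' e + ε * ∑ t, d t := by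
  rw [hap.1.sum_mul_load, hfe'.sum_mul_load, Finset.mul_sum, ← Finset.sum_add_distrib]
  exact Finset.sum_le_sum fun t _ => hap.type_cost_le hfe' t

end IsEpsWE

end CongestionGame

theorem stmt9_general [Fintype E] [Fintype T]
    (strat : T → Finset (Finset E)) (c : E → ℝ → ℝ) (d : T → ℝ)
    (α β ε : ℝ) (hβ : 0 < β) (hε : 0 ≤ ε)
    (hdtot : ∑ t, d t ≤ α)
    (hderiv : ∀ e, ∀ z ∈ Set.Icc (0 : ℝ) α,
      ∃ dz, HasDerivWithinAt (c e) dz (Set.Icc 0 α) z ∧ β ≤ dz)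
    (yhat : T → Finset E → ℝ) (xhat : E → ℝ) (hWE : IsEpsWE strat c d 0 yhat xhat)
    (y : T → Finset E → ℝ) (x : E → ℝ) (hap : IsEpsWE strat c d ε y x) :
    Real.sqrt (∑ e, (x e - xhat e) ^ 2) ≤ Real.sqrt (ε * α / β) := by
  have hmem : ∀ {y' : T → Finset E → ℝ} {x' : E → ℝ}, Feasible strat d y' x' →
      ∀ e, x' e ∈ Set.Icc 0 α := fun hfe e =>
    ⟨hfe.load_nonneg e, (hfe.load_le_sum_demand e).trans hdtot⟩
  have happrox := hap.variational_ineq hWE.1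
  have hexact := hWE.variational_ineq hap.1
  have hsum : β * ∑ e, (x e - xhat e) ^ 2 ≤ ε * α := by
    calc β * ∑ e, (x e - xhat e) ^ 2
        ≤ ∑ e, (c e (x e) - c e (xhat e)) * (x e - xhat e) := by
          rw [Finset.mul_sum]
          exact Finset.sum_le_sum fun e _ => (convex_Icc 0 α).mul_sq_sub_le_of_le_hasDerivWithinAt
            (hderiv e) (hmem hWE.1 e) (hmem hap.1 e)
      _ = (∑ e, c e (x e) * x e - ∑ e, c e (x e) * xhat e)
          + (∑ e, c e (xhat e) * xhat e - ∑ e, c e (xhat e) * x e) := by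
          simp only [← Finset.sum_sub_distrib, ← Finset.sum_add_distrib]
          exact Finset.sum_congr rfl fun e _ => by ring
      _ ≤ ε * ∑ t, d t := by linarith
      _ ≤ ε * α := mul_le_mul_of_nonneg_left hdtot hε
  exact Real.sqrt_le_sqrt ((le_div_iff₀ hβ).mpr (by linarith))

/-- If `(yhat, xhat)` is a Wardrop equilibrium of a nonatomic congestion game with weakly increasing
differentiable costs with `c_e' ≥ β > 0` on `[0, α]` and total demand at most `α`, and `(y, x)`
is a feasible `ε`-approximate Wardrop equilibrium, then `‖x - xhat‖₂ ≤ √(ε α / β)`. -/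
theorem stmt9 [Fintype E] [Fintype T]
    (strat : T → Finset (Finset E)) (c : E → ℝ → ℝ) (d : T → ℝ)
    (α β ε : ℝ) (hβ : 0 < β) (hε : 0 ≤ ε)
    (hcpos : ∀ e z, 0 ≤ z → 0 ≤ c e z)
    (hd : ∀ t, 0 ≤ d t) (hdtot : ∑ t, d t ≤ α)
    (hmono : ∀ e, MonotoneOn (c e) (Set.Icc 0 α))
    (hderiv : ∀ e, ∀ z ∈ Set.Icc (0 : ℝ) α,
      ∃ dz, HasDerivWithinAt (c e) dz (Set.Icc 0 α) z ∧ β ≤ dz)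
    (yhat : T → Finset E → ℝ) (xhat : E → ℝ) (hWE : IsEpsWE strat c d 0 yhat xhat)
    (y : T → Finset E → ℝ) (x : E → ℝ) (hap : IsEpsWE strat c d ε y x) :
    Real.sqrt (∑ e, (x e - xhat e) ^ 2) ≤ Real.sqrt (ε * α / β) :=
  stmt9_general strat c d α β ε hβ hε hdtot hderiv yhat xhat hWE y x hap
end

section
/- Let Γⁿ be a sequence of weighted congestion games with |Nⁿ| → ∞, max weight wⁿ → 0, and per-type aggregate demands dⁿ_t → d_t. Then for any sequence of mixed Nash equilibria σ̂ⁿ, the expected flow-load pairs (ŷⁿ, x̂ⁿ) are bounded, every accumulation point (ŷ, x̂) is a Wardrop equilibrium of the nonatomic game with demands (d_t), and along any convergent subsequence the random flow-load pairs (Yⁿ, Xⁿ) converge in distribution to the constant (ŷ, x̂). -/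
open scoped BigOperators Classical
open Filter Topology

section Defs

variable {E T N : Type*}

/-- Expectation of `g` under the product measure where each player `i` independently draws a
pure strategy according to the mixed strategy `σ i`. -/
noncomputable def expVal [Fintype E] [Fintype N] (σ : N → Finset E → ℝ)
    (g : (N → Finset E) → ℝ) : ℝ :=
  ∑ a : N → Finset E, (∏ i, σ i (a i)) * g a

/-- The random resource load `X_e = ∑ i w_i 1{e ∈ S_i}`. -/
noncomputable def loadW [Fintype E] [Fintype N] (w : N → ℝ) (e : E)
    (a : N → Finset E) : ℝ :=
  ∑ i, if e ∈ a i then w i else 0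

/-- The conditional load `X_{i,e} = w_i + ∑_{j ≠ i} w_j 1{e ∈ S_j}` seen by player `i` on
resource `e`. -/
noncomputable def loadWi [Fintype E] [Fintype N] (w : N → ℝ) (i : N) (e : E)
    (a : N → Finset E) : ℝ :=
  w i + ∑ j, if j ≠ i ∧ e ∈ a j then w j else 0

/-- The random strategy flow `Y_{t,s} = ∑_{i : t_i = t} w_i 1{S_i = s}`. -/
noncomputable def flowW [Fintype E] [Fintype N] (w : N → ℝ) (tm : N → T) (t : T)
    (s : Finset E) (a : N → Finset E) : ℝ :=
  ∑ i, if tm i = t ∧ a i = s then w i else 0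

/-- `σ` is a mixed strategy profile: each `σ i` is a probability distribution over the
strategy set of player `i`'s type. -/
def IsMixed [Fintype E] (strat : T → Finset (Finset E)) (tm : N → T)
    (σ : N → Finset E → ℝ) : Prop :=
  (∀ i s, 0 ≤ σ i s) ∧ (∀ i s, s ∉ strat (tm i) → σ i s = 0) ∧
  (∀ i, ∑ s ∈ strat (tm i), σ i s = 1)

/-- Mixed Nash equilibrium of a weighted congestion game. -/
def IsMNE [Fintype E] [Fintype N] (strat : T → Finset (Finset E)) (c : E → ℝ → ℝ)
    (w : N → ℝ) (tm : N → T) (σ : N → Finset E → ℝ) : Prop :=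
  IsMixed strat tm σ ∧
  ∀ i, ∀ s ∈ strat (tm i), ∀ s' ∈ strat (tm i), 0 < σ i s →
    expVal σ (fun a => ∑ e ∈ s, c e (loadWi w i e a)) ≤
      expVal σ (fun a => ∑ e ∈ s', c e (loadWi w i e a))

/-- A Wardrop equilibrium of the nonatomic game. -/
def IsWE [Fintype E] [Fintype T] (strat : T → Finset (Finset E)) (c : E → ℝ → ℝ)
    (d : T → ℝ) (y : T → Finset E → ℝ) (x : E → ℝ) : Prop :=
  Feasible strat d y x ∧
  ∀ t, ∀ s ∈ strat t, ∀ s' ∈ strat t, 0 < y t s →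
    ∑ e ∈ s, c e (x e) ≤ ∑ e ∈ s', c e (x e)

end Defs


/-!
When the maximal weight tends to zero, every load `X_e` and flow `Y_{t,s}` is a sum of
independent terms of size at most `w_i`, so its variance is at most `∑ w_i ^ 2 ≤ max w · ∑ w`,
which tends to zero. Hence the random flow-load pair concentrates at its mean, which is feasible
for the current demands; this gives the convergence in distribution. The load `X_{i,e}` seen by a
player differs from `X_e` by at most `w_i`, so by uniform continuity of the costs on the bounded
range of loads, the expected cost of every strategy is asymptotically the cost of the limit pair,
uniformly over players. A strategy with positive limit flow is played with positive probability
by some player of its type, and passing to the limit in that player's equilibrium inequality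
gives the Wardrop condition.
-/

section Expectation

variable {E N : Type*} [Fintype E] {σ : N → Finset E → ℝ}

structure IsMixedProfile (σ : N → Finset E → ℝ) : Prop where
  nonneg : ∀ i s, 0 ≤ σ i s
  sum_eq_one : ∀ i, ∑ s, σ i s = 1

theorem IsMixed.isMixedProfile {T : Type*} {strat : T → Finset (Finset E)} {tm : N → T}
    (h : IsMixed strat tm σ) : IsMixedProfile σ where
  nonneg := h.1
  sum_eq_one i := by
    rw [← h.2.2 i]
    exact (Finset.sum_subset (Finset.subset_univ _) fun s _ hs => h.2.1 i s hs).symm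

variable [Fintype N]

theorem expVal_add (g h : (N → Finset E) → ℝ) :
    expVal σ (fun a => g a + h a) = expVal σ g + expVal σ h := by
  simp only [expVal, mul_add, Finset.sum_add_distrib]

theorem expVal_sub (g h : (N → Finset E) → ℝ) :
    expVal σ (fun a => g a - h a) = expVal σ g - expVal σ h := by
  simp only [expVal, mul_sub, Finset.sum_sub_distrib]

theorem expVal_const_mul (r : ℝ) (g : (N → Finset E) → ℝ) :
    expVal σ (fun a => r * g a) = r * expVal σ g := by
  simp only [expVal, Finset.mul_sum, mul_left_comm]

theorem expVal_sum {ι : Type*} (u : Finset ι) (g : ι → (N → Finset E) → ℝ) :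
    expVal σ (fun a => ∑ e ∈ u, g e a) = ∑ e ∈ u, expVal σ (g e) := by
  simp only [expVal, Finset.mul_sum]
  exact Finset.sum_comm

theorem expVal_prod (u : N → Finset E → ℝ) :
    expVal σ (fun a => ∏ i, u i (a i)) = ∏ i, ∑ s, σ i s * u i s := by
  rw [Finset.prod_univ_sum, Fintype.piFinset_univ]
  exact Finset.sum_congr rfl fun a _ => Finset.prod_mul_distrib.symm

theorem IsMixedProfile.expVal_const (hσ : IsMixedProfile σ) (r : ℝ) :
    expVal σ (fun _ => r) = r := by
  have hone : expVal σ (fun _ => 1) = 1 := by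
    simpa [hσ.sum_eq_one] using expVal_prod (σ := σ) (fun _ _ => 1)
  simpa [hone] using expVal_const_mul (σ := σ) r (fun _ => 1)

theorem IsMixedProfile.expVal_nonneg (hσ : IsMixedProfile σ) {g : (N → Finset E) → ℝ}
    (hg : ∀ a, 0 ≤ g a) : 0 ≤ expVal σ g :=
  Finset.sum_nonneg fun a _ => mul_nonneg (Finset.prod_nonneg fun i _ => hσ.nonneg i (a i)) (hg a)

theorem IsMixedProfile.expVal_mono (hσ : IsMixedProfile σ) {g h : (N → Finset E) → ℝ}
    (hgh : ∀ a, g a ≤ h a) : expVal σ g ≤ expVal σ h := by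
  have := hσ.expVal_nonneg fun a => sub_nonneg.2 (hgh a)
  rwa [expVal_sub, sub_nonneg] at this

theorem IsMixedProfile.abs_expVal_le (hσ : IsMixedProfile σ) (g : (N → Finset E) → ℝ) :
    |expVal σ g| ≤ expVal σ (fun a => |g a|) := by
  refine (Finset.abs_sum_le_sum_abs _ _).trans_eq (Finset.sum_congr rfl fun a _ => ?_)
  rw [abs_mul, abs_of_nonneg (Finset.prod_nonneg fun i _ => hσ.nonneg i (a i))]

theorem IsMixedProfile.abs_expVal_le_of_abs_le (hσ : IsMixedProfile σ)
    {g : (N → Finset E) → ℝ} {B : ℝ} (hg : ∀ a, |g a| ≤ B) : |expVal σ g| ≤ B :=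
  (hσ.abs_expVal_le g).trans ((hσ.expVal_mono hg).trans_eq (hσ.expVal_const B))

theorem IsMixedProfile.expVal_mem_Icc (hσ : IsMixedProfile σ) {g : (N → Finset E) → ℝ}
    {lo hi : ℝ} (hg : ∀ a, g a ∈ Set.Icc lo hi) : expVal σ g ∈ Set.Icc lo hi :=
  ⟨(hσ.expVal_const lo).symm.trans_le (hσ.expVal_mono fun a => (hg a).1),
    (hσ.expVal_mono fun a => (hg a).2).trans_eq (hσ.expVal_const hi)⟩

theorem IsMixedProfile.abs_expVal_sub_le_add (hσ : IsMixedProfile σ)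
    {g S : (N → Finset E) → ℝ} {b ε r B : ℝ} (hε : 0 ≤ ε) (hr : 0 < r)
    (hB : ∀ a, |g a - b| ≤ B) (hS : ∀ a, 0 ≤ S a) (h : ∀ a, |g a - b| ≤ ε ∨ r ≤ S a) :
    |expVal σ g - b| ≤ ε + B / r * expVal σ S := by
  have hpt : ∀ a, |g a - b| ≤ ε + B / r * S a := by
    intro a
    have hBr : 0 ≤ B / r := div_nonneg ((abs_nonneg _).trans (hB a)) hr.le
    rcases h a with hclose | hfar
    · nlinarith [mul_nonneg hBr (hS a)]
    · calc |g a - b| ≤ B / r * r := by rw [div_mul_cancel₀ _ hr.ne']; exact hB a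
        _ ≤ ε + B / r * S a := by nlinarith [mul_le_mul_of_nonneg_left hfar hBr]
  calc |expVal σ g - b| = |expVal σ (fun a => g a - b)| := by
        rw [expVal_sub g (fun _ => b), hσ.expVal_const]
    _ ≤ expVal σ (fun a => |g a - b|) := hσ.abs_expVal_le _
    _ ≤ expVal σ (fun a => ε + B / r * S a) := hσ.expVal_mono hpt
    _ = ε + B / r * expVal σ S := by
        rw [expVal_add (fun _ => ε), hσ.expVal_const, expVal_const_mul]

theorem IsMixedProfile.expVal_apply (hσ : IsMixedProfile σ) (i : N) (f : Finset E → ℝ) :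
    expVal σ (fun a => f (a i)) = ∑ s, σ i s * f s := by
  simpa [mul_ite, Finset.sum_ite_irrel, hσ.sum_eq_one] using
    expVal_prod (σ := σ) (fun j s => if j = i then f s else 1)

theorem IsMixedProfile.expVal_mul_apply (hσ : IsMixedProfile σ) {i j : N} (hij : i ≠ j)
    (f g : Finset E → ℝ) :
    expVal σ (fun a => f (a i) * g (a j)) = (∑ s, σ i s * f s) * ∑ s, σ j s * g s := by
  set u : N → Finset E → ℝ := fun k s => if k = i then f s else if k = j then g s else 1
  have hprod : ∀ v : N → ℝ, (∀ k, k ≠ i ∧ k ≠ j → v k = 1) → ∏ k, v k = v i * v j :=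
    fun v hv => Finset.prod_eq_mul i j hij (fun k _ hk => hv k hk) (by simp) (by simp)
  calc expVal σ (fun a => f (a i) * g (a j)) = expVal σ (fun a => ∏ k, u k (a k)) := by
        congr 1; funext a
        rw [hprod _ fun k hk => by simp [u, hk.1, hk.2]]
        simp [u, hij.symm]
    _ = (∑ s, σ i s * f s) * ∑ s, σ j s * g s := by
        rw [expVal_prod, hprod _ fun k hk => by simp [u, hk.1, hk.2, hσ.sum_eq_one]]
        simp [u, hij.symm]

end Expectation

section Variance

variable {E N : Type*} [Fintype E] [Fintype N] {σ : N → Finset E → ℝ}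

noncomputable def varVal (σ : N → Finset E → ℝ) (g : (N → Finset E) → ℝ) : ℝ :=
  expVal σ (fun a => (g a - expVal σ g) ^ 2)

theorem IsMixedProfile.varVal_nonneg (hσ : IsMixedProfile σ) (g : (N → Finset E) → ℝ) :
    0 ≤ varVal σ g :=
  hσ.expVal_nonneg fun _ => sq_nonneg _

theorem IsMixedProfile.varVal_sum_le (hσ : IsMixedProfile σ) {w : N → ℝ}
    (u : N → Finset E → ℝ) (hu0 : ∀ i s, 0 ≤ u i s) (hu : ∀ i s, u i s ≤ w i) :
    varVal σ (fun a => ∑ i, u i (a i)) ≤ ∑ i, w i ^ 2 := by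
  set m : N → ℝ := fun i => ∑ s, σ i s * u i s
  have hm : ∀ i, 0 ≤ m i ∧ m i ≤ w i := fun i =>
    ⟨Finset.sum_nonneg fun s _ => mul_nonneg (hσ.nonneg i s) (hu0 i s),
      (hσ.expVal_apply i (u i)).symm.trans_le
        ((hσ.expVal_mono fun a => hu i (a i)).trans_eq (hσ.expVal_const _))⟩
  have hcentered : ∀ i, ∑ s, σ i s * (u i s - m i) = 0 := fun i => by
    simp only [mul_sub, Finset.sum_sub_distrib, ← Finset.sum_mul, hσ.sum_eq_one, one_mul, m,
      sub_self]
  have hmean : expVal σ (fun a => ∑ i, u i (a i)) = ∑ i, m i := by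
    rw [expVal_sum]
    exact Finset.sum_congr rfl fun i _ => hσ.expVal_apply i (u i)
  have hexpand : ∀ a : N → Finset E, (∑ i, u i (a i) - ∑ i, m i) ^ 2 =
      ∑ i, ∑ j, (u i (a i) - m i) * (u j (a j) - m j) := fun a => by
    rw [← Finset.sum_sub_distrib, sq, Finset.sum_mul_sum]
  -- the cross terms vanish by independence, leaving the sum of the individual variances
  rw [varVal, hmean, funext hexpand, expVal_sum]
  refine Finset.sum_le_sum fun i _ => ?_
  rw [expVal_sum, Finset.sum_eq_single i (fun j _ hji => by
    rw [hσ.expVal_mul_apply (Ne.symm hji) (fun s => u i s - m i) (fun s => u j s - m j),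
      hcentered, zero_mul]) (by simp)]
  refine (hσ.expVal_mono fun a => ?_).trans_eq (hσ.expVal_const (w i ^ 2))
  nlinarith [hu0 i (a i), hu i (a i), hm i]

end Variance

section Loads

variable {E T N : Type*} [Fintype E] [Fintype N] {w : N → ℝ}

theorem loadW_mem_Icc (hw : ∀ i, 0 ≤ w i) (e : E) (a : N → Finset E) :
    loadW w e a ∈ Set.Icc 0 (∑ i, w i) :=
  ⟨Finset.sum_nonneg fun i _ => by split_ifs <;> simp [hw i],
    Finset.sum_le_sum fun i _ => by split_ifs <;> simp [hw i]⟩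

theorem flowW_mem_Icc (hw : ∀ i, 0 ≤ w i) (tm : N → T) (t : T) (s : Finset E)
    (a : N → Finset E) : flowW w tm t s a ∈ Set.Icc 0 (∑ i, w i) :=
  ⟨Finset.sum_nonneg fun i _ => by split_ifs <;> simp [hw i],
    Finset.sum_le_sum fun i _ => by split_ifs <;> simp [hw i]⟩

theorem loadWi_eq_sum (i : N) (e : E) (a : N → Finset E) :
    loadWi w i e a = ∑ j, if j = i ∨ e ∈ a j then w j else 0 := by
  rw [loadWi, ← Fintype.sum_ite_eq' i w, ← Finset.sum_add_distrib]
  refine Finset.sum_congr rfl fun j _ => ?_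
  by_cases hj : j = i <;> simp [hj]

theorem loadWi_mem_Icc (hw : ∀ i, 0 ≤ w i) (i : N) (e : E) (a : N → Finset E) :
    loadWi w i e a ∈ Set.Icc 0 (∑ j, w j) := by
  rw [loadWi_eq_sum]
  exact ⟨Finset.sum_nonneg fun j _ => by split_ifs <;> simp [hw j],
    Finset.sum_le_sum fun j _ => by split_ifs <;> simp [hw j]⟩

theorem abs_loadWi_sub_loadW_le (hw : ∀ i, 0 ≤ w i) (i : N) (e : E) (a : N → Finset E) :
    |loadWi w i e a - loadW w e a| ≤ w i := by
  rw [loadWi_eq_sum, loadW, ← Finset.sum_sub_distrib,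
    Finset.sum_eq_single i (fun j _ hj => by simp [hj]) (by simp)]
  by_cases he : e ∈ a i <;> simp [he, abs_of_nonneg (hw i), hw i]

variable {σ : N → Finset E → ℝ}

theorem IsMixedProfile.varVal_loadW_le (hσ : IsMixedProfile σ) (hw : ∀ i, 0 ≤ w i) (e : E) :
    varVal σ (loadW w e) ≤ ∑ i, w i ^ 2 :=
  hσ.varVal_sum_le (fun i s => if e ∈ s then w i else 0)
    (fun i s => by split_ifs <;> simp [hw i]) (fun i s => by split_ifs <;> simp [hw i])

theorem IsMixedProfile.varVal_flowW_le (hσ : IsMixedProfile σ) (hw : ∀ i, 0 ≤ w i)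
    (tm : N → T) (t : T) (s : Finset E) : varVal σ (flowW w tm t s) ≤ ∑ i, w i ^ 2 :=
  hσ.varVal_sum_le (fun i s' => if tm i = t ∧ s' = s then w i else 0)
    (fun i s => by split_ifs <;> simp [hw i]) (fun i s => by split_ifs <;> simp [hw i])

theorem IsMixedProfile.expVal_flowW (hσ : IsMixedProfile σ) (tm : N → T) (t : T)
    (s : Finset E) : expVal σ (flowW w tm t s) = ∑ i, if tm i = t then w i * σ i s else 0 := by
  unfold flowW
  rw [expVal_sum]
  refine Finset.sum_congr rfl fun i _ => ?_
  rw [hσ.expVal_apply i (fun s' => if tm i = t ∧ s' = s then w i else 0)]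
  by_cases ht : tm i = t <;> simp [ht, mul_comm]

theorem IsMixedProfile.exists_pos_of_expVal_flowW_pos (hσ : IsMixedProfile σ) {tm : N → T}
    {t : T} {s : Finset E} (h : 0 < expVal σ (flowW w tm t s)) : ∃ i, tm i = t ∧ 0 < σ i s := by
  rw [hσ.expVal_flowW] at h
  obtain ⟨i, -, hi⟩ := Finset.exists_lt_of_sum_lt (Finset.sum_const_zero.trans_lt h)
  split_ifs at hi with ht
  · exact ⟨i, ht, (hσ.nonneg i s).lt_of_ne fun h0 => by simp [← h0] at hi⟩
  · exact absurd hi (lt_irrefl 0)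

end Loads

section Feasibility

variable {E T N : Type*} [Fintype E] [Fintype N] {strat : T → Finset (Finset E)}
  {tm : N → T} {w : N → ℝ} {σ : N → Finset E → ℝ}

noncomputable def typeDemand (w : N → ℝ) (tm : N → T) (t : T) : ℝ :=
  ∑ i, if tm i = t then w i else 0

theorem IsMixed.expVal_congr (hmix : IsMixed strat tm σ) {g h : (N → Finset E) → ℝ}
    (hgh : ∀ a, (∀ i, a i ∈ strat (tm i)) → g a = h a) : expVal σ g = expVal σ h := by
  refine Finset.sum_congr rfl fun a _ => ?_
  by_cases ha : ∀ i, a i ∈ strat (tm i)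
  · rw [hgh a ha]
  · obtain ⟨i, hi⟩ := not_forall.1 ha
    rw [Finset.prod_eq_zero (Finset.mem_univ i) (hmix.2.1 i (a i) hi), zero_mul, zero_mul]

variable [Fintype T]

theorem sum_typeDemand (w : N → ℝ) (tm : N → T) : ∑ t, typeDemand w tm t = ∑ i, w i := by
  simp only [typeDemand]
  rw [Finset.sum_comm]
  simp

theorem loadW_eq_sum_flowW {a : N → Finset E} (ha : ∀ i, a i ∈ strat (tm i)) (e : E) :
    loadW w e a = ∑ t, ∑ s ∈ strat t, if e ∈ s then flowW w tm t s a else 0 := by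
  have hterm : ∀ t s, (if e ∈ s then flowW w tm t s a else 0) =
      ∑ i, if tm i = t ∧ a i = s ∧ e ∈ a i then w i else 0 := fun t s => by
    by_cases he : e ∈ s
    · simp only [he, if_true, flowW]
      exact Finset.sum_congr rfl fun i _ => by by_cases h : a i = s <;> simp [h, he]
    · rw [if_neg he]
      exact (Finset.sum_eq_zero fun i _ =>
        if_neg fun (h : tm i = t ∧ a i = s ∧ e ∈ a i) => he (h.2.1 ▸ h.2.2)).symm
  have hplayer : ∀ i, ∑ t, ∑ s ∈ strat t, (if tm i = t ∧ a i = s ∧ e ∈ a i then w i else 0) =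
      if e ∈ a i then w i else 0 := fun i => by
    simp [ite_and, ha i]
  calc loadW w e a
      = ∑ i, ∑ t, ∑ s ∈ strat t, (if tm i = t ∧ a i = s ∧ e ∈ a i then w i else 0) :=
        Finset.sum_congr rfl fun i _ => (hplayer i).symm
    _ = ∑ t, ∑ s ∈ strat t, ∑ i, (if tm i = t ∧ a i = s ∧ e ∈ a i then w i else 0) := by
        rw [Finset.sum_comm]
        exact Finset.sum_congr rfl fun t _ => Finset.sum_comm
    _ = _ := by simp only [hterm]

theorem feasible_flowW_loadW (hw : ∀ i, 0 ≤ w i) {a : N → Finset E}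
    (ha : ∀ i, a i ∈ strat (tm i)) :
    Feasible strat (typeDemand w tm) (fun t s => flowW w tm t s a) (fun e => loadW w e a) := by
  refine ⟨fun t s => (flowW_mem_Icc hw tm t s a).1, fun t s hs => ?_, fun t => ?_,
    loadW_eq_sum_flowW ha⟩
  · exact Finset.sum_eq_zero fun i _ =>
      if_neg fun (h : tm i = t ∧ a i = s) => hs (h.1 ▸ h.2 ▸ ha i)
  · simp only [typeDemand, flowW]
    rw [Finset.sum_comm]
    refine Finset.sum_congr rfl fun i _ => ?_
    rcases eq_or_ne (tm i) t with rfl | ht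
    · simp [ha i]
    · simp [ht]

theorem IsMixed.feasible_expVal (hmix : IsMixed strat tm σ) (hw : ∀ i, 0 ≤ w i) :
    Feasible strat (typeDemand w tm) (fun t s => expVal σ (flowW w tm t s))
      (fun e => expVal σ (loadW w e)) := by
  have hσ := hmix.isMixedProfile
  have hpure := fun (a : N → Finset E) (ha : ∀ i, a i ∈ strat (tm i)) =>
    feasible_flowW_loadW hw ha
  refine ⟨fun t s => hσ.expVal_nonneg fun a => (flowW_mem_Icc hw tm t s a).1,
    fun t s hs => ?_, fun t => ?_, fun e => ?_⟩
  · dsimp only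
    rw [hmix.expVal_congr (g := flowW w tm t s) (h := fun _ => 0)
        fun a ha => (hpure a ha).2.1 t s hs, hσ.expVal_const]
  · rw [← expVal_sum, hmix.expVal_congr (h := fun _ => typeDemand w tm t)
      fun a ha => ((hpure a ha).2.2.1 t).symm, hσ.expVal_const]
  · dsimp only
    rw [hmix.expVal_congr (g := loadW w e) fun a ha => (hpure a ha).2.2.2 e, expVal_sum]
    refine Finset.sum_congr rfl fun t _ => ?_
    rw [expVal_sum]
    refine Finset.sum_congr rfl fun s _ => ?_
    by_cases he : e ∈ s <;> simp [he, hσ.expVal_const]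

theorem Feasible.of_tendsto {ι : Type*} {l : Filter ι} [l.NeBot] {dk : ι → T → ℝ}
    {yk : ι → T → Finset E → ℝ} {xk : ι → E → ℝ} {d : T → ℝ} {y : T → Finset E → ℝ}
    {x : E → ℝ} (h : ∀ k, Feasible strat (dk k) (yk k) (xk k))
    (hd : ∀ t, Tendsto (fun k => dk k t) l (𝓝 (d t)))
    (hy : ∀ t s, Tendsto (fun k => yk k t s) l (𝓝 (y t s)))
    (hx : ∀ e, Tendsto (fun k => xk k e) l (𝓝 (x e))) : Feasible strat d y x := by
  refine ⟨fun t s => ge_of_tendsto' (hy t s) fun k => (h k).1 t s,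
    fun t s hs => tendsto_nhds_unique (hy t s) ?_, fun t => tendsto_nhds_unique (hd t) ?_,
    fun e => tendsto_nhds_unique (hx e) ?_⟩
  · exact tendsto_const_nhds.congr fun k => ((h k).2.1 t s hs).symm
  · exact (tendsto_finsetSum _ fun s _ => hy t s).congr fun k => ((h k).2.2.1 t).symm
  · refine (tendsto_finsetSum _ fun t _ => tendsto_finsetSum _ fun s _ => ?_).congr
      fun k => ((h k).2.2.2 e).symm
    by_cases he : e ∈ s <;> simp [he, hy t s]

end Feasibility

section Limits

variable {E : Type*} [Fintype E] {ι : Type*} {l : Filter ι} {P : ι → Type*}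
  [∀ k, Fintype (P k)] {σ : ∀ k, P k → Finset E → ℝ} {w : ∀ k, P k → ℝ}

theorem tendsto_sum_sq_nhds_zero {M : ℝ} (hw : ∀ k i, 0 ≤ w k i) (hM : ∀ k, ∑ i, w k i ≤ M)
    (hwmax : ∀ ε > 0, ∀ᶠ k in l, ∀ i, w k i < ε) :
    Tendsto (fun k => ∑ i, w k i ^ 2) l (𝓝 0) := by
  rw [Metric.tendsto_nhds]
  intro ε hε
  have hη : 0 < ε / (|M| + 1) := by positivity
  filter_upwards [hwmax _ hη] with k hk
  rw [Real.dist_0_eq_abs, abs_of_nonneg (Finset.sum_nonneg fun i _ => sq_nonneg _)]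
  calc ∑ i, w k i ^ 2 ≤ ∑ i, ε / (|M| + 1) * w k i :=
        Finset.sum_le_sum fun i _ => by
          rw [sq]; exact mul_le_mul_of_nonneg_right (hk i).le (hw k i)
    _ ≤ ε / (|M| + 1) * |M| := by
        rw [← Finset.mul_sum]; exact mul_le_mul_of_nonneg_left ((hM k).trans (le_abs_self M)) hη.le
    _ < ε := by
        rw [div_mul_eq_mul_div, div_lt_iff₀ (by positivity)]
        nlinarith

theorem tendsto_expVal_comp_of_tendsto_expVal_dist_sq {X : Type*} [PseudoMetricSpace X]
    (hσ : ∀ k, IsMixedProfile (σ k)) {Z : ∀ k, (P k → Finset E) → X} {m : ι → X} {μ : X}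
    {f : X → ℝ} {B : ℝ} (hf : ContinuousAt f μ) (hB : ∀ k a, |f (Z k a) - f μ| ≤ B)
    (hm : Tendsto m l (𝓝 μ))
    (hZ : Tendsto (fun k => expVal (σ k) (fun a => dist (Z k a) (m k) ^ 2)) l (𝓝 0)) :
    Tendsto (fun k => expVal (σ k) (fun a => f (Z k a))) l (𝓝 (f μ)) := by
  rw [Metric.tendsto_nhds]
  intro ε hε
  obtain ⟨δ, hδ, hfδ⟩ := Metric.continuousAt_iff.1 hf (ε / 2) (half_pos hε)
  have hsmall : ∀ᶠ k in l,
      B / (δ / 2) ^ 2 * expVal (σ k) (fun a => dist (Z k a) (m k) ^ 2) < ε / 2 := by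
    have := hZ.const_mul (B / (δ / 2) ^ 2)
    rw [mul_zero] at this
    exact this.eventually (gt_mem_nhds (half_pos hε))
  filter_upwards [hm.eventually (Metric.ball_mem_nhds μ (half_pos hδ)), hsmall] with k hmk hk
  have hdich : ∀ a, |f (Z k a) - f μ| ≤ ε / 2 ∨ (δ / 2) ^ 2 ≤ dist (Z k a) (m k) ^ 2 := by
    intro a
    by_cases hclose : dist (Z k a) μ < δ
    · exact Or.inl (Real.dist_eq _ _ ▸ (hfδ hclose).le)
    · have := (not_lt.1 hclose).trans (dist_triangle (Z k a) (m k) μ)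
      exact Or.inr (pow_le_pow_left₀ (by positivity) (by linarith [Metric.mem_ball.1 hmk]) 2)
  rw [Real.dist_eq]
  linarith [(hσ k).abs_expVal_sub_le_add (half_pos hε).le (by positivity) (hB k)
    (fun a => sq_nonneg _) hdich]

variable {M : ℝ}

theorem eventually_abs_expVal_loadWi_sub_le [l.NeBot] (hσ : ∀ k, IsMixedProfile (σ k))
    (hw : ∀ k i, 0 ≤ w k i) (hM : ∀ k, ∑ i, w k i ≤ M)
    (hwmax : ∀ ε > 0, ∀ᶠ k in l, ∀ i, w k i < ε) {g : ℝ → ℝ} (hg : Continuous g) {e : E}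
    {x : ℝ} (hx : Tendsto (fun k => expVal (σ k) (loadW (w k) e)) l (𝓝 x)) :
    ∀ ε > 0, ∀ᶠ k in l, ∀ i, |expVal (σ k) (fun a => g (loadWi (w k) i e a)) - g x| ≤ ε := by
  intro ε hε
  have hload : ∀ k a, loadW (w k) e a ∈ Set.Icc 0 M := fun k a =>
    Set.Icc_subset_Icc_right (hM k) (loadW_mem_Icc (hw k) e a)
  have hloadi : ∀ k i a, loadWi (w k) i e a ∈ Set.Icc 0 M := fun k i a =>
    Set.Icc_subset_Icc_right (hM k) (loadWi_mem_Icc (hw k) i e a)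
  have hxM : x ∈ Set.Icc 0 M :=
    isClosed_Icc.mem_of_tendsto hx (Eventually.of_forall fun k => (hσ k).expVal_mem_Icc (hload k))
  obtain ⟨C, hC⟩ := isCompact_Icc.exists_bound_of_continuousOn hg.continuousOn (s := Set.Icc 0 M)
  have hvar : Tendsto (fun k => expVal (σ k)
      (fun a => dist (loadW (w k) e a) (expVal (σ k) (loadW (w k) e)) ^ 2)) l (𝓝 0) := by
    simp only [Real.dist_eq, sq_abs]
    exact squeeze_zero (fun k => (hσ k).varVal_nonneg _) (fun k => (hσ k).varVal_loadW_le (hw k) e)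
      (tendsto_sum_sq_nhds_zero hw hM hwmax)
  have hconc := tendsto_expVal_comp_of_tendsto_expVal_dist_sq hσ hg.continuousAt (B := 2 * C)
    (fun k a => (abs_sub _ _).trans (by
      linarith [Real.norm_eq_abs _ ▸ hC _ (hload k a), Real.norm_eq_abs _ ▸ hC x hxM])) hx hvar
  obtain ⟨δ, hδ, hgδ⟩ := Metric.uniformContinuousOn_iff.1
    (isCompact_Icc.uniformContinuousOn_of_continuous hg.continuousOn) (ε / 2) (half_pos hε)
  filter_upwards [hwmax δ hδ, Metric.tendsto_nhds.1 hconc (ε / 2) (half_pos hε)] with k hk hconck i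
  have hshift : |expVal (σ k) (fun a => g (loadWi (w k) i e a)) -
      expVal (σ k) (fun a => g (loadW (w k) e a))| ≤ ε / 2 := by
    rw [← expVal_sub]
    refine (hσ k).abs_expVal_le_of_abs_le fun a => ?_
    rw [← Real.dist_eq]
    refine (hgδ _ (hloadi k i a) _ (hload k a) ?_).le
    rw [Real.dist_eq]
    exact (abs_loadWi_sub_loadW_le (hw k) i e a).trans_lt (hk i)
  rw [Real.dist_eq] at hconck
  linarith [abs_sub_le (expVal (σ k) (fun a => g (loadWi (w k) i e a)))
    (expVal (σ k) (fun a => g (loadW (w k) e a))) (g x)]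

theorem eventually_abs_expVal_pathCost_sub_le [l.NeBot] (hσ : ∀ k, IsMixedProfile (σ k))
    (hw : ∀ k i, 0 ≤ w k i) (hM : ∀ k, ∑ i, w k i ≤ M)
    (hwmax : ∀ ε > 0, ∀ᶠ k in l, ∀ i, w k i < ε) {c : E → ℝ → ℝ} (hc : ∀ e, Continuous (c e))
    {x : E → ℝ} (hx : ∀ e, Tendsto (fun k => expVal (σ k) (loadW (w k) e)) l (𝓝 (x e))) :
    ∀ ε > 0, ∀ᶠ k in l, ∀ i (u : Finset E),
      |expVal (σ k) (fun a => ∑ e ∈ u, c e (loadWi (w k) i e a)) - ∑ e ∈ u, c e (x e)| ≤ ε := by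
  intro ε hε
  have hε' : 0 < ε / (Fintype.card E + 1) := by positivity
  filter_upwards [eventually_all.2 fun e =>
    eventually_abs_expVal_loadWi_sub_le hσ hw hM hwmax (hc e) (hx e) _ hε'] with k hk i u
  have hu : (u.card : ℝ) ≤ Fintype.card E := by exact_mod_cast Finset.card_le_univ u
  rw [expVal_sum, ← Finset.sum_sub_distrib]
  calc _ ≤ ∑ e ∈ u, ε / (Fintype.card E + 1) :=
        (Finset.abs_sum_le_sum_abs _ _).trans (Finset.sum_le_sum fun e _ => hk e i)
    _ = u.card * (ε / (Fintype.card E + 1)) := by rw [Finset.sum_const, nsmul_eq_mul]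
    _ ≤ (Fintype.card E + 1) * (ε / (Fintype.card E + 1)) := by gcongr; linarith
    _ = ε := by field_simp

theorem isWE_of_tendsto {T : Type*} [Fintype T] [l.NeBot] {strat : T → Finset (Finset E)}
    {c : E → ℝ → ℝ} {tm : ∀ k, P k → T} {d : T → ℝ} {y : T → Finset E → ℝ} {x : E → ℝ}
    (hNE : ∀ k, IsMNE strat c (w k) (tm k) (σ k)) (hc : ∀ e, Continuous (c e))
    (hw : ∀ k i, 0 ≤ w k i) (hM : ∀ k, ∑ i, w k i ≤ M)
    (hwmax : ∀ ε > 0, ∀ᶠ k in l, ∀ i, w k i < ε)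
    (hdem : ∀ t, Tendsto (fun k => typeDemand (w k) (tm k) t) l (𝓝 (d t)))
    (hy : ∀ t s, Tendsto (fun k => expVal (σ k) (flowW (w k) (tm k) t s)) l (𝓝 (y t s)))
    (hx : ∀ e, Tendsto (fun k => expVal (σ k) (loadW (w k) e)) l (𝓝 (x e))) :
    IsWE strat c d y x := by
  have hσ : ∀ k, IsMixedProfile (σ k) := fun k => (hNE k).1.isMixedProfile
  refine ⟨Feasible.of_tendsto (fun k => (hNE k).1.feasible_expVal (hw k)) hdem hy hx, ?_⟩
  intro t s hs s' hs' hpos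
  refine le_of_forall_pos_le_add fun ε hε => ?_
  obtain ⟨k, hk, hflow⟩ := ((eventually_abs_expVal_pathCost_sub_le hσ hw hM hwmax hc hx
    (ε / 2) (half_pos hε)).and ((hy t s).eventually (lt_mem_nhds hpos))).exists
  -- some player of type `t` uses `s` with positive probability, so `s` is a best reply for it
  obtain ⟨i, rfl, hi⟩ := (hσ k).exists_pos_of_expVal_flowW_pos hflow
  linarith [(hNE k).2 i s hs s' hs' hi, abs_le.1 (hk i s), abs_le.1 (hk i s')]

theorem dist_pi_sq_le_sum_sq {α : Type*} [Fintype α] (x y : α → ℝ) :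
    dist x y ^ 2 ≤ ∑ i, (x i - y i) ^ 2 := by
  have h0 : 0 ≤ ∑ i, (x i - y i) ^ 2 := Finset.sum_nonneg fun _ _ => sq_nonneg _
  refine (Real.le_sqrt dist_nonneg h0).1 ((dist_pi_le_iff (Real.sqrt_nonneg _)).2 fun i => ?_)
  rw [Real.dist_eq]
  exact Real.abs_le_sqrt (Finset.single_le_sum (f := fun i => (x i - y i) ^ 2)
    (fun _ _ => sq_nonneg _) (Finset.mem_univ i))

theorem dist_prod_pi_sq_le_sum_sq {α β : Type*} [Fintype α] [Fintype β] (y y' : α → ℝ)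
    (x x' : β → ℝ) :
    dist (y, x) (y', x') ^ 2 ≤ ∑ p, (y p - y' p) ^ 2 + ∑ e, (x e - x' e) ^ 2 := by
  rw [Prod.dist_eq]
  have h1 := dist_pi_sq_le_sum_sq y y'
  have h2 := dist_pi_sq_le_sum_sq x x'
  rcases max_cases (dist y y') (dist x x') with ⟨h, -⟩ | ⟨h, -⟩ <;> rw [h] <;>
    nlinarith [sq_nonneg (dist y y'), sq_nonneg (dist x x')]

theorem tendsto_expVal_comp_flowW_loadW {T : Type*} [Fintype T] {tm : ∀ k, P k → T}
    (hσ : ∀ k, IsMixedProfile (σ k)) (hw : ∀ k i, 0 ≤ w k i)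
    (hsq : Tendsto (fun k => ∑ i, w k i ^ 2) l (𝓝 0)) {y : T → Finset E → ℝ} {x : E → ℝ}
    (hy : ∀ t s, Tendsto (fun k => expVal (σ k) (flowW (w k) (tm k) t s)) l (𝓝 (y t s)))
    (hx : ∀ e, Tendsto (fun k => expVal (σ k) (loadW (w k) e)) l (𝓝 (x e)))
    {f : (T × Finset E → ℝ) × (E → ℝ) → ℝ} (hf : Continuous f) (hfb : ∃ C, ∀ z, |f z| ≤ C) :
    Tendsto (fun k => expVal (σ k) (fun a =>
        f (fun p => flowW (w k) (tm k) p.1 p.2 a, fun e => loadW (w k) e a)))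
      l (𝓝 (f (fun p => y p.1 p.2, x))) := by
  obtain ⟨C, hC⟩ := hfb
  set K : ℝ := Fintype.card (T × Finset E) + Fintype.card E
  have hm : Tendsto (fun k => ((fun p : T × Finset E => expVal (σ k) (flowW (w k) (tm k) p.1 p.2)),
      fun e => expVal (σ k) (loadW (w k) e))) l (𝓝 (fun p => y p.1 p.2, x)) :=
    Tendsto.prodMk_nhds (tendsto_pi_nhds.2 fun p => hy p.1 p.2) (tendsto_pi_nhds.2 hx)
  refine tendsto_expVal_comp_of_tendsto_expVal_dist_sq hσ hf.continuousAt (B := 2 * C)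
    (fun _ _ => ((abs_sub _ _).trans (add_le_add (hC _) (hC _))).trans_eq (two_mul C).symm) hm ?_
  refine squeeze_zero (fun k => (hσ k).expVal_nonneg fun a => sq_nonneg _) (fun k => ?_)
    (by simpa using hsq.const_mul K)
  calc _ ≤ expVal (σ k) (fun a =>
        ∑ p : T × Finset E, (flowW (w k) (tm k) p.1 p.2 a -
          expVal (σ k) (flowW (w k) (tm k) p.1 p.2)) ^ 2 +
        ∑ e, (loadW (w k) e a - expVal (σ k) (loadW (w k) e)) ^ 2) :=
        (hσ k).expVal_mono fun a => dist_prod_pi_sq_le_sum_sq _ _ _ _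
    _ = ∑ p : T × Finset E, varVal (σ k) (flowW (w k) (tm k) p.1 p.2) +
        ∑ e, varVal (σ k) (loadW (w k) e) := by
        rw [expVal_add, expVal_sum, expVal_sum]; rfl
    _ ≤ ∑ _p : T × Finset E, ∑ i, w k i ^ 2 + ∑ _e : E, ∑ i, w k i ^ 2 :=
        add_le_add (Finset.sum_le_sum fun p _ => (hσ k).varVal_flowW_le (hw k) _ _ _)
          (Finset.sum_le_sum fun e _ => (hσ k).varVal_loadW_le (hw k) e)
    _ = K * ∑ i, w k i ^ 2 := by
        simp only [Finset.sum_const, Finset.card_univ, nsmul_eq_mul, K]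
        ring

end Limits

theorem stmt12_general {E T : Type*} [Fintype E] [Fintype T]
    (strat : T → Finset (Finset E))
    (c : E → ℝ → ℝ) (hc : ∀ e, Continuous (c e))
    (P : ℕ → Type) [∀ n, Fintype (P n)]
    (w : ∀ n, P n → ℝ) (hw : ∀ n i, 0 ≤ w n i)
    (tm : ∀ n, P n → T) (d : T → ℝ)
    (hwmax : ∀ ε > (0 : ℝ), ∀ᶠ n in atTop, ∀ i : P n, w n i < ε)
    (hdem : ∀ t, Tendsto (fun n => ∑ i : P n, if tm n i = t then w n i else 0)
      atTop (nhds (d t)))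
    (σ : ∀ n, P n → Finset E → ℝ) (hNE : ∀ n, IsMNE strat c (w n) (tm n) (σ n)) :
    (∃ M : ℝ, ∀ n t s e,
      |expVal (σ n) (flowW (w n) (tm n) t s)| ≤ M ∧ |expVal (σ n) (loadW (w n) e)| ≤ M) ∧
    ∀ (φ : ℕ → ℕ), StrictMono φ →
      ∀ (yhat : T → Finset E → ℝ) (xhat : E → ℝ),
      (∀ t s, Tendsto (fun k => expVal (σ (φ k)) (flowW (w (φ k)) (tm (φ k)) t s))
        atTop (nhds (yhat t s))) →
      (∀ e, Tendsto (fun k => expVal (σ (φ k)) (loadW (w (φ k)) e))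
        atTop (nhds (xhat e))) →
      IsWE strat c d yhat xhat ∧
      ∀ f : ((T × Finset E → ℝ) × (E → ℝ)) → ℝ, Continuous f → (∃ M, ∀ z, |f z| ≤ M) →
        Tendsto (fun k => expVal (σ (φ k)) (fun a =>
            f (fun p => flowW (w (φ k)) (tm (φ k)) p.1 p.2 a,
               fun e => loadW (w (φ k)) e a)))
          atTop (nhds (f (fun p => yhat p.1 p.2, xhat))) := by
  have hσ : ∀ n, IsMixedProfile (σ n) := fun n => (hNE n).1.isMixedProfile
  obtain ⟨M, hM⟩ : ∃ M, ∀ n, ∑ i, w n i ≤ M := by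
    obtain ⟨M, hM⟩ := (tendsto_finsetSum Finset.univ fun t _ => hdem t).bddAbove_range
    exact ⟨M, fun n => (sum_typeDemand (w n) (tm n)).symm.trans_le (hM ⟨n, rfl⟩)⟩
  have hbound : ∀ n (g : (P n → Finset E) → ℝ), (∀ a, g a ∈ Set.Icc 0 (∑ i, w n i)) →
      |expVal (σ n) g| ≤ M := fun n g hg =>
    have hE := (hσ n).expVal_mem_Icc hg
    (abs_of_nonneg hE.1).trans_le (hE.2.trans (hM n))
  refine ⟨⟨M, fun n t s e => ⟨hbound n _ (flowW_mem_Icc (hw n) (tm n) t s),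
    hbound n _ (loadW_mem_Icc (hw n) e)⟩⟩, fun φ hφ yhat xhat hy hx => ?_⟩
  have hwmaxφ : ∀ ε > 0, ∀ᶠ k in atTop, ∀ i, w (φ k) i < ε := fun ε hε =>
    hφ.tendsto_atTop.eventually (hwmax ε hε)
  exact ⟨isWE_of_tendsto (fun k => hNE (φ k)) hc (fun k => hw (φ k)) (fun k => hM (φ k)) hwmaxφ
      (fun t => (hdem t).comp hφ.tendsto_atTop) hy hx,
    fun f hf hfb => tendsto_expVal_comp_flowW_loadW (fun k => hσ (φ k)) (fun k => hw (φ k))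
      (tendsto_sum_sq_nhds_zero (fun k => hw (φ k)) (fun k => hM (φ k)) hwmaxφ) hy hx hf hfb⟩

/-- Convergence of weighted congestion games: for a sequence of games with the number of
players tending to infinity, maximal weight tending to zero, and per-type aggregate demands
converging to `d`, and for any sequence of mixed Nash equilibria, the expected flow-load pairs
are bounded; every accumulation point (subsequential limit) is a Wardrop equilibrium of the
nonatomic limit game; and along any convergent subsequence the random flow-load pairs converge
in distribution to the (constant) limit pair. -/
theorem stmt12 {E T : Type*} [Fintype E] [Fintype T]
    (strat : T → Finset (Finset E)) (hstrat : ∀ t, (strat t).Nonempty)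
    (c : E → ℝ → ℝ) (hc : ∀ e, Continuous (c e)) (hmono : ∀ e, Monotone (c e))
    (P : ℕ → Type) [∀ n, Fintype (P n)]
    (w : ∀ n, P n → ℝ) (hw : ∀ n i, 0 ≤ w n i)
    (tm : ∀ n, P n → T) (d : T → ℝ)
    (hcard : Tendsto (fun n => (Fintype.card (P n) : ℝ)) atTop atTop)
    (hwmax : ∀ ε > (0 : ℝ), ∀ᶠ n in atTop, ∀ i : P n, w n i < ε)
    (hdem : ∀ t, Tendsto (fun n => ∑ i : P n, if tm n i = t then w n i else 0)
      atTop (nhds (d t)))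
    (σ : ∀ n, P n → Finset E → ℝ) (hNE : ∀ n, IsMNE strat c (w n) (tm n) (σ n)) :
    (∃ M : ℝ, ∀ n t s e,
      |expVal (σ n) (flowW (w n) (tm n) t s)| ≤ M ∧ |expVal (σ n) (loadW (w n) e)| ≤ M) ∧
    ∀ (φ : ℕ → ℕ), StrictMono φ →
      ∀ (yhat : T → Finset E → ℝ) (xhat : E → ℝ),
      (∀ t s, Tendsto (fun k => expVal (σ (φ k)) (flowW (w (φ k)) (tm (φ k)) t s))
        atTop (nhds (yhat t s))) →
      (∀ e, Tendsto (fun k => expVal (σ (φ k)) (loadW (w (φ k)) e))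
        atTop (nhds (xhat e))) →
      IsWE strat c d yhat xhat ∧
      ∀ f : ((T × Finset E → ℝ) × (E → ℝ)) → ℝ, Continuous f → (∃ M, ∀ z, |f z| ≤ M) →
        Tendsto (fun k => expVal (σ (φ k)) (fun a =>
            f (fun p => flowW (w (φ k)) (tm (φ k)) p.1 p.2 a,
               fun e => loadW (w (φ k)) e a)))
          atTop (nhds (f (fun p => yhat p.1 p.2, xhat))) :=
  stmt12_general strat c hc P w hw tm d hwmax hdem σ hNE
end

section
/- Let Γⁿ be a sequence of Bernoulli congestion games satisfying |Nⁿ| → ∞, rⁿ = max_i rⁿ_i → 0, and dⁿ_t = ∑_{i: tⁿ_i = t} rⁿ_i → d_t, and let σⁿ be any sequence of mixed strategy profiles with expected flows yⁿ_{t,s} → y_{t,s}. Then the random strategy flows Yⁿ_{t,s} = ∑_{i: tⁿ_i = t} Uⁿ_i 1{Sⁿ_i = s} converge in total variation to Poisson(y_{t,s}) random variables, and the limit variables (Y_{t,s}) over all types and strategies are mutually independent. -/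
open scoped BigOperators Classical
open Filter Topology

section Defs

variable {E T N : Type*}

/-- Expectation under the product measure of a Bernoulli congestion game: each player `i` is
active independently with probability `r i`, and independently draws a pure strategy according
to the mixed strategy `σ i`. -/
noncomputable def bexpVal [Fintype E] [Fintype N] (r : N → ℝ) (σ : N → Finset E → ℝ)
    (g : (N → Bool) → (N → Finset E) → ℝ) : ℝ :=
  ∑ u : N → Bool, ∑ a : N → Finset E,
    (∏ i, (if u i then r i else 1 - r i) * σ i (a i)) * g u a

/-- The random strategy flow `Y_{t,s} = ∑_{i : t_i = t} U_i 1{S_i = s}` of a Bernoulli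
congestion game. -/
noncomputable def bflow [Fintype E] [Fintype N] (tm : N → T) (t : T) (s : Finset E)
    (u : N → Bool) (a : N → Finset E) : ℕ :=
  ∑ i, if tm i = t ∧ u i ∧ a i = s then 1 else 0

end Defs

/-!
The flow vector `(Y_{t,s})` is a sum over players of independent vectors `X_i`, each equal to `0`
or to a unit vector `e_c`, with `P(X_i = e_c) = μ_{i,c}` and `∑_c μ_{i,c} = r_i`. Laws are compared
in `ℓ¹`, which does not increase under push-forwards and is subadditive on products; hence it is
subadditive on independent sums. By Le Cam's one-step bound each `X_i` is within `2 r_i²` of the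
product of Poisson laws `Poi(μ_{i,c})`, and these sum (Poisson additivity, coordinatewise) to the
product of `Poi(λ_c)` with `λ_c = ∑_i μ_{i,c}`, the expected flow. Continuity of `Poi(λ)` in `λ`
then puts the joint law within `2 ∑_i r_i² + 2 ∑_c |λ_c - y_c|` of `∏_c Poi(y_c)`, and
`∑_i r_i² ≤ (max_i r_i) ∑_i r_i → 0`. Total variation of a single flow is the `ℓ¹` distance of a
marginal, and the joint probabilities are values of the joint law, so both claims follow.
-/

namespace BernoulliCongestion

open ENNReal Finset

section MassFunction

variable {X Y Z : Type*}

/-- `p x - q x + (q x - p x)` is `|p x - q x|`, written with truncated subtraction in `ℝ≥0∞`. -/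
noncomputable def l1Dist (p q : X → ℝ≥0∞) : ℝ≥0∞ := ∑' x, (p x - q x + (q x - p x))

noncomputable def massMap [DecidableEq Y] (f : X → Y) (p : X → ℝ≥0∞) (y : Y) : ℝ≥0∞ :=
  ∑' x, if f x = y then p x else 0

noncomputable def massPi {ι : Type*} [Fintype ι] (p : ι → X → ℝ≥0∞) (x : ι → X) : ℝ≥0∞ :=
  ∏ i, p i (x i)

lemma l1Dist_comm (p q : X → ℝ≥0∞) : l1Dist p q = l1Dist q p :=
  tsum_congr fun _ => add_comm _ _

lemma l1Dist_self (p : X → ℝ≥0∞) : l1Dist p p = 0 := by simp [l1Dist]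

lemma l1Dist_triangle (p q r : X → ℝ≥0∞) : l1Dist p r ≤ l1Dist p q + l1Dist q r := by
  unfold l1Dist
  rw [← ENNReal.tsum_add]
  refine ENNReal.tsum_le_tsum fun x => ?_
  calc p x - r x + (r x - p x)
      ≤ p x - q x + (q x - r x) + (r x - q x + (q x - p x)) :=
        add_le_add tsub_le_tsub_add_tsub tsub_le_tsub_add_tsub
    _ = _ := by ring

lemma tsub_add_tsub_le_l1Dist (p q : X → ℝ≥0∞) (x : X) :
    p x - q x + (q x - p x) ≤ l1Dist p q :=
  ENNReal.le_tsum x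

lemma l1Dist_le_add (p q : X → ℝ≥0∞) : l1Dist p q ≤ ∑' x, p x + ∑' x, q x := by
  rw [← ENNReal.tsum_add]
  exact ENNReal.tsum_le_tsum fun x => add_le_add tsub_le_self tsub_le_self

lemma l1Dist_ne_top {p q : X → ℝ≥0∞} (hp : ∑' x, p x = 1) (hq : ∑' x, q x = 1) :
    l1Dist p q ≠ ∞ :=
  ne_top_of_le_ne_top (by simp [hp, hq]) (l1Dist_le_add _ _)

lemma l1Dist_eq_two_mul (p q : X → ℝ≥0∞) (hp : ∑' x, p x = 1) (hq : ∑' x, q x = 1) :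
    l1Dist p q = 2 * ∑' x, (p x - q x) := by
  have split : ∀ a b : ℝ≥0∞, a - b + min a b = a := fun a b => by
    rcases le_total a b with h | h
    · simp [tsub_eq_zero_of_le h, h]
    · rw [min_eq_right h, tsub_add_cancel_of_le h]
  have hmin : ∑' x, min (p x) (q x) ≠ ∞ :=
    ne_top_of_le_ne_top (by simp [hp]) (ENNReal.tsum_le_tsum fun x => min_le_left _ _)
  have hpq : ∑' x, (p x - q x) = ∑' x, (q x - p x) := by
    refine (ENNReal.add_left_inj hmin).1 ?_
    rw [← ENNReal.tsum_add, ← ENNReal.tsum_add]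
    simp_rw [split, min_comm (p _), split, hp, hq]
  rw [l1Dist, ENNReal.tsum_add, ← hpq, two_mul]

lemma ne_top_of_tsum_le_one {m : X → ℝ≥0∞} (h : ∑' x, m x ≤ 1) (x : X) : m x ≠ ∞ :=
  ne_top_of_le_ne_top one_ne_top ((ENNReal.le_tsum x).trans h)

lemma tsum_tsub_tsum_le (f g : X → ℝ≥0∞) : ∑' x, f x - ∑' x, g x ≤ ∑' x, (f x - g x) := by
  rw [tsub_le_iff_right, ← ENNReal.tsum_add]
  exact ENNReal.tsum_le_tsum fun x => le_tsub_add

lemma tsum_ite_eq_apply [DecidableEq Y] (f : X → Y) (a : Y → ℝ≥0∞) (x : X) :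
    ∑' y, (if f x = y then a y else 0) = a (f x) :=
  (tsum_eq_single (f x) fun _ hy => if_neg (Ne.symm hy)).trans (if_pos rfl)

lemma tsum_massMap [DecidableEq Y] (f : X → Y) (p : X → ℝ≥0∞) :
    ∑' y, massMap f p y = ∑' x, p x := by
  unfold massMap
  rw [ENNReal.tsum_comm]
  exact tsum_congr fun x => tsum_ite_eq_apply f (fun _ => p x) x

lemma massMap_comp [DecidableEq Y] [DecidableEq Z] (g : Y → Z) (f : X → Y) (p : X → ℝ≥0∞) :
    massMap g (massMap f p) = massMap (g ∘ f) p := by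
  funext z
  simp only [massMap, Function.comp_apply]
  calc ∑' y, (if g y = z then ∑' x, (if f x = y then p x else 0) else 0)
      = ∑' y, ∑' x, if f x = y then (if g y = z then p x else 0) else 0 := by
        refine tsum_congr fun y => ?_
        split_ifs <;> simp
    _ = ∑' x, if g (f x) = z then p x else 0 := by
        rw [ENNReal.tsum_comm]
        exact tsum_congr fun x => tsum_ite_eq_apply f (fun y => if g y = z then p x else 0) x

lemma massMap_equiv [DecidableEq Y] (e : X ≃ Y) (p : X → ℝ≥0∞) (y : Y) :
    massMap e p y = p (e.symm y) := by
  refine (tsum_eq_single (e.symm y) fun x hx => if_neg ?_).trans (if_pos (by simp))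
  rintro rfl
  simp at hx

lemma l1Dist_massMap_le [DecidableEq Y] (f : X → Y) (p q : X → ℝ≥0∞) :
    l1Dist (massMap f p) (massMap f q) ≤ l1Dist p q := by
  have key : ∀ (p q : X → ℝ≥0∞) (y : Y), massMap f p y - massMap f q y ≤
      ∑' x, if f x = y then p x - q x else 0 := fun p q y =>
    (tsum_tsub_tsum_le _ _).trans <| ENNReal.tsum_le_tsum fun x => by split_ifs <;> simp
  calc l1Dist (massMap f p) (massMap f q)
      ≤ ∑' y, ((∑' x, if f x = y then p x - q x else 0) +
          ∑' x, if f x = y then q x - p x else 0) :=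
        ENNReal.tsum_le_tsum fun y => add_le_add (key p q y) (key q p y)
    _ = ∑' y, massMap f (fun x => p x - q x) y + ∑' y, massMap f (fun x => q x - p x) y :=
        ENNReal.tsum_add
    _ = l1Dist p q := by rw [tsum_massMap, tsum_massMap, ← ENNReal.tsum_add]; rfl

lemma l1Dist_comp_equiv (e : X ≃ Y) (p q : Y → ℝ≥0∞) : l1Dist (p ∘ e) (q ∘ e) = l1Dist p q :=
  e.tsum_eq fun y => p y - q y + (q y - p y)

lemma tsum_mul_tsum (p : X → ℝ≥0∞) (q : Y → ℝ≥0∞) :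
    ∑' z : X × Y, p z.1 * q z.2 = (∑' x, p x) * ∑' y, q y := by
  rw [ENNReal.tsum_prod', ← ENNReal.tsum_mul_right]
  simp_rw [ENNReal.tsum_mul_left]

lemma l1Dist_mul_right (p q : X → ℝ≥0∞) {R : Y → ℝ≥0∞} (hR : ∀ y, R y ≠ ∞) :
    l1Dist (fun z : X × Y => p z.1 * R z.2) (fun z => q z.1 * R z.2) =
      l1Dist p q * ∑' y, R y := by
  unfold l1Dist
  rw [← tsum_mul_tsum]
  refine tsum_congr fun z => ?_
  rw [add_mul, ENNReal.sub_mul fun _ _ => hR _, ENNReal.sub_mul fun _ _ => hR _]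

lemma l1Dist_prod_le {p q : X → ℝ≥0∞} {P Q : Y → ℝ≥0∞} (hq : ∑' x, q x ≤ 1)
    (hP : ∑' y, P y ≤ 1) :
    l1Dist (fun z : X × Y => p z.1 * P z.2) (fun z => q z.1 * Q z.2) ≤
      l1Dist p q + l1Dist P Q := by
  have swap : l1Dist (fun z : X × Y => q z.1 * P z.2) (fun z => q z.1 * Q z.2) =
      l1Dist P Q * ∑' x, q x := by
    rw [← l1Dist_mul_right P Q (ne_top_of_tsum_le_one hq),
      ← l1Dist_comp_equiv (Equiv.prodComm X Y)]
    simp only [Function.comp_def, Equiv.prodComm_apply, Prod.fst_swap, Prod.snd_swap, mul_comm]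
  calc _ ≤ l1Dist (fun z : X × Y => p z.1 * P z.2) (fun z => q z.1 * P z.2) +
        l1Dist (fun z : X × Y => q z.1 * P z.2) (fun z => q z.1 * Q z.2) :=
        l1Dist_triangle _ _ _
    _ ≤ l1Dist p q * 1 + l1Dist P Q * 1 := by
        rw [l1Dist_mul_right p q (ne_top_of_tsum_le_one hP), swap]
        gcongr
    _ = _ := by simp

section Pi

variable {ι κ : Type*} [Fintype ι] [Fintype κ]

lemma massPi_arrowCongr (e : ι ≃ κ) (p : κ → X → ℝ≥0∞) (x : ι → X) :
    massPi p (e.arrowCongr (Equiv.refl X) x) = massPi (fun i => p (e i)) x := by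
  simp only [massPi, Equiv.arrowCongr_apply, Equiv.coe_refl, Function.comp_apply, id]
  exact (e.prod_comp fun k => p k (x (e.symm k))).symm.trans (by simp)

lemma massPi_option {α : Type*} [Fintype α] (p : Option α → X → ℝ≥0∞) (z : X × (α → X)) :
    massPi p (Equiv.piOptionEquivProd.symm z) = p none z.1 * massPi (fun i => p (some i)) z.2 :=
  Fintype.prod_option _

lemma tsum_massPi (p : ι → X → ℝ≥0∞) : ∑' x, massPi p x = ∏ i, ∑' a, p i a := by
  refine Fintype.induction_empty_option
    (P := fun ι _ => ∀ p : ι → X → ℝ≥0∞, ∑' x, massPi p x = ∏ i, ∑' a, p i a) ?_ ?_ ?_ ι p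
  · intro α β _ e ih p
    let _ := Fintype.ofEquiv β e.symm
    rw [← (e.arrowCongr (Equiv.refl X)).tsum_eq, tsum_congr (massPi_arrowCongr e p), ih]
    exact e.prod_comp fun k => ∑' a, p k a
  · intro p
    rw [tsum_eq_single (fun i => i.elim) fun x hx => (hx (funext fun i => i.elim)).elim]
    simp [massPi]
  · intro α _ ih p
    rw [← Equiv.piOptionEquivProd.symm.tsum_eq]
    simp_rw [massPi_option, Fintype.prod_option]
    rw [tsum_mul_tsum, ih]

lemma tsum_massPi_le_one {p : ι → X → ℝ≥0∞} (hp : ∀ i, ∑' a, p i a ≤ 1) :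
    ∑' x, massPi p x ≤ 1 :=
  (tsum_massPi p).trans_le (prod_le_one' fun i _ => hp i)

lemma l1Dist_massPi_le {p q : ι → X → ℝ≥0∞} (hp : ∀ i, ∑' a, p i a ≤ 1)
    (hq : ∀ i, ∑' a, q i a ≤ 1) :
    l1Dist (massPi p) (massPi q) ≤ ∑ i, l1Dist (p i) (q i) := by
  refine Fintype.induction_empty_option (P := fun ι _ => ∀ p q : ι → X → ℝ≥0∞,
      (∀ i, ∑' a, p i a ≤ 1) → (∀ i, ∑' a, q i a ≤ 1) →
      l1Dist (massPi p) (massPi q) ≤ ∑ i, l1Dist (p i) (q i)) ?_ ?_ ?_ ι p q hp hq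
  · intro α β _ e ih p q hp hq
    let _ := Fintype.ofEquiv β e.symm
    rw [← l1Dist_comp_equiv (e.arrowCongr (Equiv.refl X)), ← e.sum_comp]
    simpa only [Function.comp_def, massPi_arrowCongr] using
      ih (fun i => p (e i)) (fun i => q (e i)) (fun i => hp _) (fun i => hq _)
  · intro p q _ _
    have : massPi p = massPi q := funext fun x => by simp [massPi]
    simp [this, l1Dist_self]
  · intro α _ ih p q hp hq
    rw [← l1Dist_comp_equiv Equiv.piOptionEquivProd.symm, Fintype.sum_option]
    simp only [Function.comp_def, massPi_option]
    exact (l1Dist_prod_le (hq none) (tsum_massPi_le_one fun i => hp (some i))).trans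
      (add_le_add_right (ih _ _ (fun i => hp _) (fun i => hq _)) _)

lemma massMap_massPi [DecidableEq Y] (f : ι → X → Y) (p : ι → X → ℝ≥0∞) :
    massMap (fun x i => f i (x i)) (massPi p) = massPi fun i => massMap (f i) (p i) := by
  funext m
  change _ = ∏ i, ∑' a, if f i a = m i then p i a else 0
  rw [← tsum_massPi]
  refine tsum_congr fun x => ?_
  unfold massPi
  by_cases h : ∀ i, f i (x i) = m i
  · rw [if_pos (funext h)]
    exact prod_congr rfl fun i _ => (if_pos (h i)).symm
  · obtain ⟨i, hi⟩ := not_forall.1 h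
    rw [if_neg fun h => hi (congrFun h i)]
    exact (prod_eq_zero (mem_univ i) (if_neg hi)).symm

lemma massMap_eval_massPi [DecidableEq X] {p : ι → X → ℝ≥0∞} (hp : ∀ i, ∑' a, p i a = 1)
    (c : ι) : massMap (fun x => x c) (massPi p) = p c := by
  classical
  funext y
  let q : ι → X → ℝ≥0∞ := fun i a => if i = c then (if a = y then p i a else 0) else p i a
  have hq : ∀ x : ι → X, (if x c = y then massPi p x else 0) = massPi q x := fun x => by
    have hcompl : ∏ i ∈ {c}ᶜ, q i (x i) = ∏ i ∈ {c}ᶜ, p i (x i) :=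
      prod_congr rfl fun i hi => if_neg (by simpa using hi)
    rw [massPi, massPi, Fintype.prod_eq_mul_prod_compl c, Fintype.prod_eq_mul_prod_compl c,
      hcompl]
    by_cases h : x c = y <;> simp [q, h]
  rw [massMap, tsum_congr hq, tsum_massPi, Fintype.prod_eq_mul_prod_compl c,
    prod_congr rfl fun i hi => (congrArg tsum (funext fun a => if_neg (by simpa using hi))).trans
      (hp i)]
  simp [q]

end Pi

end MassFunction

section Convergence

variable {X Y : Type*}

lemma toReal_tsub_add_tsub {a b : ℝ≥0∞} (ha : a ≠ ∞) (hb : b ≠ ∞) :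
    (a - b + (b - a)).toReal = |a.toReal - b.toReal| := by
  rcases le_total a b with h | h
  · rw [tsub_eq_zero_of_le h, zero_add, toReal_sub_of_le h hb, abs_sub_comm,
      abs_of_nonneg (sub_nonneg.2 (toReal_mono hb h))]
  · rw [tsub_eq_zero_of_le h, add_zero, toReal_sub_of_le h ha,
      abs_of_nonneg (sub_nonneg.2 (toReal_mono ha h))]

lemma toReal_l1Dist {p q : X → ℝ≥0∞} (hp : ∀ x, p x ≠ ∞) (hq : ∀ x, q x ≠ ∞) :
    (l1Dist p q).toReal = ∑' x, |(p x).toReal - (q x).toReal| := by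
  rw [l1Dist, tsum_toReal_eq fun x => add_ne_top.2 ⟨sub_ne_top (hp x), sub_ne_top (hq x)⟩]
  exact tsum_congr fun x => toReal_tsub_add_tsub (hp x) (hq x)

variable {p : ℕ → X → ℝ≥0∞} {q : X → ℝ≥0∞}

lemma tendsto_toReal_l1Dist (h : Tendsto (fun n => l1Dist (p n) q) atTop (𝓝 0)) :
    Tendsto (fun n => (l1Dist (p n) q).toReal) atTop (𝓝 0) := by
  simpa [Function.comp_def] using (ENNReal.tendsto_toReal zero_ne_top).comp h

lemma tendsto_tsum_abs_massMap_of_l1Dist [DecidableEq Y] (hp : ∀ n, ∑' x, p n x = 1)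
    (hq : ∑' x, q x = 1) (h : Tendsto (fun n => l1Dist (p n) q) atTop (𝓝 0)) (g : X → Y) :
    Tendsto (fun n => ∑' y, |(massMap g (p n) y).toReal - (massMap g q y).toReal|) atTop (𝓝 0) := by
  have hp' : ∀ n, ∑' y, massMap g (p n) y = 1 := fun n => (tsum_massMap _ _).trans (hp n)
  have hq' : ∑' y, massMap g q y = 1 := (tsum_massMap _ _).trans hq
  refine squeeze_zero (fun n => tsum_nonneg fun _ => abs_nonneg _) (fun n => ?_)
    (tendsto_toReal_l1Dist h)
  rw [← toReal_l1Dist (ne_top_of_tsum_le_one (hp' n).le) (ne_top_of_tsum_le_one hq'.le)]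
  exact toReal_mono (l1Dist_ne_top (hp n) hq) (l1Dist_massMap_le _ _ _)

lemma tendsto_toReal_apply_of_l1Dist (hp : ∀ n, ∑' x, p n x = 1) (hq : ∑' x, q x = 1)
    (h : Tendsto (fun n => l1Dist (p n) q) atTop (𝓝 0)) (x : X) :
    Tendsto (fun n => (p n x).toReal) atTop (𝓝 (q x).toReal) := by
  rw [tendsto_iff_norm_sub_tendsto_zero]
  refine squeeze_zero (fun n => norm_nonneg _) (fun n => ?_) (tendsto_toReal_l1Dist h)
  rw [Real.norm_eq_abs, ← toReal_tsub_add_tsub (ne_top_of_tsum_le_one (hp n).le x)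
    (ne_top_of_tsum_le_one hq.le x)]
  exact toReal_mono (l1Dist_ne_top (hp n) hq) (tsub_add_tsub_le_l1Dist _ _ x)

end Convergence

section Poisson

lemma poiPMF_nonneg {a : ℝ} (ha : 0 ≤ a) (k : ℕ) : 0 ≤ poiPMF a k := by
  unfold poiPMF
  positivity

open Nat in
lemma sum_piAntidiag_prod_poiPMF {ι : Type*} [Fintype ι] [DecidableEq ι] (a : ι → ℝ) (k : ℕ) :
    ∑ m ∈ piAntidiag univ k, ∏ i, poiPMF (a i) (m i) = poiPMF (∑ i, a i) k := by
  simp only [poiPMF, sum_pow_eq_sum_piAntidiag, mul_sum, sum_div]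
  refine sum_congr rfl fun m hm => ?_
  rw [Finset.prod_div_distrib, Finset.prod_mul_distrib, ← Real.exp_sum, sum_neg_distrib]
  have hk : ∑ i, m i = k := (mem_piAntidiag.1 hm).1
  have hspec : ((∏ i, (m i)! : ℕ) : ℝ) * (Nat.multinomial univ m : ℝ) = (k ! : ℝ) := by
    rw [← hk]
    exact_mod_cast Nat.multinomial_spec univ m
  have h1 : ((∏ i, (m i)! : ℕ) : ℝ) ≠ 0 := by positivity
  have h2 : (k ! : ℝ) ≠ 0 := by positivity
  push_cast at hspec h1 ⊢
  field_simp
  rw [← hspec]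
  ring

noncomputable def poissonMass (a : ℝ) (k : ℕ) : ℝ≥0∞ := ENNReal.ofReal (poiPMF a k)

noncomputable def multiPoisson {C : Type*} [Fintype C] (μ : C → ℝ) : (C → ℕ) → ℝ≥0∞ :=
  massPi fun c => poissonMass (μ c)

lemma tsum_poissonMass {a : ℝ} (ha : 0 ≤ a) : ∑' k, poissonMass a k = 1 := by
  have h : HasSum (poiPMF a) 1 := by
    have h := ProbabilityTheory.hasSum_one_poissonMeasure a.toNNReal
    rwa [Real.coe_toNNReal a ha] at h
  unfold poissonMass
  rw [← ENNReal.ofReal_tsum_of_nonneg (poiPMF_nonneg ha) h.summable, h.tsum_eq, ofReal_one]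

lemma poissonMass_zero_apply (k : ℕ) : poissonMass 0 k = if k = 0 then 1 else 0 := by
  cases k <;> simp [poissonMass, poiPMF]

lemma massMap_sum_massPi_poissonMass {ι : Type*} [Fintype ι] {a : ι → ℝ} (ha : ∀ i, 0 ≤ a i) :
    massMap (fun m : ι → ℕ => ∑ i, m i) (massPi fun i => poissonMass (a i)) =
      poissonMass (∑ i, a i) := by
  classical
  funext k
  have hmem : ∀ m : ι → ℕ, m ∈ piAntidiag univ k ↔ ∑ i, m i = k := by simp [mem_piAntidiag]
  rw [massMap, tsum_eq_sum (s := piAntidiag univ k) fun m hm => if_neg ((hmem m).not.1 hm),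
    poissonMass, ← sum_piAntidiag_prod_poiPMF, ofReal_sum_of_nonneg fun m _ =>
      prod_nonneg fun i _ => poiPMF_nonneg (ha i) _]
  refine sum_congr rfl fun m hm => ?_
  rw [if_pos ((hmem m).1 hm), massPi, ofReal_prod_of_nonneg fun i _ => poiPMF_nonneg (ha i) _]
  rfl

/-- Transposing `ι → C → ℕ` reduces this to one Poisson sum per coordinate `c`. -/
lemma massMap_sum_massPi_multiPoisson {ι C : Type*} [Fintype ι] [Fintype C] {μ : ι → C → ℝ}
    (hμ : ∀ i c, 0 ≤ μ i c) :
    massMap (fun m : ι → C → ℕ => ∑ i, m i) (massPi fun i => multiPoisson (μ i)) =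
      multiPoisson (∑ i, μ i) := by
  let τ : (C → ι → ℕ) ≃ (ι → C → ℕ) := Equiv.piComm _
  have htranspose : massPi (fun i => multiPoisson (μ i)) =
      massMap τ (massPi fun c => massPi fun i => poissonMass (μ i c)) := by
    funext m
    rw [massMap_equiv]
    exact prod_comm
  have hsum : (fun m : ι → C → ℕ => ∑ i, m i) ∘ τ = fun m c => ∑ i, m c i := by
    funext m c
    simp [τ, Equiv.piComm, Function.swap]
  rw [htranspose, massMap_comp, hsum, massMap_massPi]
  simp_rw [massMap_sum_massPi_poissonMass (hμ · _)]
  simp [multiPoisson]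

lemma l1Dist_poissonMass_zero_le {c : ℝ} (hc : 0 ≤ c) :
    l1Dist (poissonMass 0) (poissonMass c) ≤ ENNReal.ofReal (2 * c) := by
  rw [l1Dist_eq_two_mul _ _ (tsum_poissonMass le_rfl) (tsum_poissonMass hc),
    tsum_eq_single 0 fun k hk => by simp [poissonMass_zero_apply, hk], poissonMass_zero_apply,
    if_pos rfl, ofReal_mul zero_le_two, ofReal_ofNat]
  gcongr
  rw [poissonMass, poiPMF, ← ofReal_one, ← ofReal_sub _ (by positivity)]
  refine ofReal_le_ofReal ?_
  simpa using Real.add_one_le_exp (-c)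

/-- For `a ≤ b`, write `Poi(a) = Poi(a) ∗ Poi(0)` and `Poi(b) = Poi(a) ∗ Poi(b - a)`. -/
lemma l1Dist_poissonMass_le {a b : ℝ} (ha : 0 ≤ a) (hb : 0 ≤ b) :
    l1Dist (poissonMass a) (poissonMass b) ≤ ENNReal.ofReal (2 * |a - b|) := by
  wlog hab : a ≤ b generalizing a b
  · rw [l1Dist_comm, abs_sub_comm]
    exact this hb ha (le_of_not_ge hab)
  have hba : 0 ≤ b - a := sub_nonneg.2 hab
  have hnonneg : ∀ c, 0 ≤ c → ∀ i, 0 ≤ ![a, c] i := fun c hc i => by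
    fin_cases i <;> simp [ha, hc]
  have split : ∀ c, 0 ≤ c → poissonMass (a + c) =
      massMap (fun m : Fin 2 → ℕ => ∑ i, m i) (massPi fun i => poissonMass (![a, c] i)) :=
    fun c hc => by rw [massMap_sum_massPi_poissonMass (hnonneg c hc)]; simp
  have hPa := split 0 le_rfl
  have hPb := split (b - a) hba
  rw [add_zero] at hPa
  rw [add_sub_cancel] at hPb
  rw [hPa, hPb]
  refine (l1Dist_massMap_le _ _ _).trans <| (l1Dist_massPi_le
    (fun i => (tsum_poissonMass (hnonneg 0 le_rfl i)).le)
    (fun i => (tsum_poissonMass (hnonneg _ hba i)).le)).trans ?_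
  simpa [l1Dist_self, abs_of_nonpos (sub_nonpos.2 hab)] using l1Dist_poissonMass_zero_le hba

variable {C : Type*} [Fintype C]

lemma multiPoisson_apply {μ : C → ℝ} (hμ : ∀ c, 0 ≤ μ c) (m : C → ℕ) :
    multiPoisson μ m = ENNReal.ofReal (∏ c, poiPMF (μ c) (m c)) :=
  (ofReal_prod_of_nonneg fun c _ => poiPMF_nonneg (hμ c) _).symm

lemma tsum_multiPoisson {μ : C → ℝ} (hμ : ∀ c, 0 ≤ μ c) : ∑' m, multiPoisson μ m = 1 := by
  rw [multiPoisson, tsum_massPi]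
  exact prod_eq_one fun c _ => tsum_poissonMass (hμ c)

lemma poiPMF_eq_toReal_massMap_multiPoisson {μ : C → ℝ} (hμ : ∀ c, 0 ≤ μ c) (c : C) (k : ℕ) :
    poiPMF (μ c) k = (massMap (fun m => m c) (multiPoisson μ) k).toReal := by
  rw [multiPoisson, massMap_eval_massPi fun c => tsum_poissonMass (hμ c), poissonMass,
    toReal_ofReal (poiPMF_nonneg (hμ c) k)]

lemma l1Dist_multiPoisson_le {μ ν : C → ℝ} (hμ : ∀ c, 0 ≤ μ c) (hν : ∀ c, 0 ≤ ν c) :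
    l1Dist (multiPoisson μ) (multiPoisson ν) ≤ ENNReal.ofReal (2 * ∑ c, |μ c - ν c|) := by
  refine (l1Dist_massPi_le (fun c => (tsum_poissonMass (hμ c)).le)
    (fun c => (tsum_poissonMass (hν c)).le)).trans ?_
  rw [mul_sum, ofReal_sum_of_nonneg fun c _ => by positivity]
  exact sum_le_sum fun c _ => l1Dist_poissonMass_le (hμ c) (hν c)

lemma multiPoisson_zero {μ : C → ℝ} (hμ : ∀ c, 0 ≤ μ c) :
    multiPoisson μ 0 = ENNReal.ofReal (Real.exp (-∑ c, μ c)) := by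
  simp [multiPoisson_apply hμ, poiPMF, ← Real.exp_sum]

lemma multiPoisson_single [DecidableEq C] {μ : C → ℝ} (hμ : ∀ c, 0 ≤ μ c) (c : C) :
    multiPoisson μ (Pi.single c 1) = ENNReal.ofReal (μ c * Real.exp (-∑ c, μ c)) := by
  have h : ∀ c', poiPMF (μ c') ((Pi.single c 1 : C → ℕ) c') =
      Real.exp (-μ c') * if c' = c then μ c' else 1 := fun c' => by
    by_cases hc : c' = c <;> simp [poiPMF, hc]
  rw [multiPoisson_apply hμ, prod_congr rfl fun c' _ => h c', prod_mul_distrib,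
    prod_ite_eq' univ c, if_pos (mem_univ c), ← Real.exp_sum, sum_neg_distrib, mul_comm]

/-- **Le Cam's one-step bound.** Off `0` the law `p` lives on the unit vectors; at `0` it has
mass `1 - ∑ μ ≤ exp (-∑ μ)`, and at `e_c` it exceeds the Poisson mass by
`μ c (1 - exp (-∑ μ)) ≤ μ c ∑ μ`. -/
lemma l1Dist_multiPoisson_le_of_unitVector [DecidableEq C] {p : (C → ℕ) → ℝ≥0∞}
    (hp : ∑' m, p m = 1) {μ : C → ℝ} (hμ : ∀ c, 0 ≤ μ c)
    (hsupp : ∀ m, m ≠ 0 → (∀ c, m ≠ Pi.single c 1) → p m = 0)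
    (hsingle : ∀ c, p (Pi.single c 1) = ENNReal.ofReal (μ c)) :
    l1Dist p (multiPoisson μ) ≤ ENNReal.ofReal (2 * (∑ c, μ c) ^ 2) := by
  set R := ∑ c, μ c
  have hR : 0 ≤ R := sum_nonneg fun c _ => hμ c
  have hexp : 1 - R ≤ Real.exp (-R) := by linarith [Real.add_one_le_exp (-R)]
  have hinj : Set.InjOn (fun c : C => (Pi.single c 1 : C → ℕ)) (univ : Finset C) :=
    fun c _ c' _ h => by simpa [Pi.single_apply, eq_comm] using congrFun h c'
  have h0 : (0 : C → ℕ) ∉ univ.image fun c => Pi.single c 1 := by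
    simp [funext_iff, Pi.single_apply]
  set S := insert 0 (univ.image fun c : C => (Pi.single c 1 : C → ℕ))
  have hS : ∑ m ∈ S, p m = p 0 + ENNReal.ofReal R := by
    rw [sum_insert h0, sum_image hinj, ofReal_sum_of_nonneg fun c _ => hμ c]
    simp_rw [hsingle]
  have hp0 : p 0 ≤ ENNReal.ofReal (1 - R) := by
    rw [ofReal_sub _ hR, ofReal_one, ← hp]
    exact ENNReal.le_sub_of_add_le_right ofReal_ne_top (hS ▸ ENNReal.sum_le_tsum S)
  rw [l1Dist_eq_two_mul _ _ hp (tsum_multiPoisson hμ), tsum_eq_sum (s := S) fun m hm => ?_]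
  · rw [sum_insert h0, sum_image hinj, multiPoisson_zero hμ,
      tsub_eq_zero_of_le (hp0.trans (ofReal_le_ofReal hexp)), zero_add]
    calc 2 * ∑ c, (p (Pi.single c 1) - multiPoisson μ (Pi.single c 1))
        ≤ 2 * ∑ c, ENNReal.ofReal (μ c * R) := by
          gcongr with c
          rw [hsingle, multiPoisson_single hμ,
            ← ofReal_sub _ (mul_nonneg (hμ c) (Real.exp_pos _).le)]
          refine ofReal_le_ofReal ?_
          nlinarith [hμ c]
      _ = ENNReal.ofReal (2 * R ^ 2) := by
          rw [← ofReal_sum_of_nonneg fun c _ => mul_nonneg (hμ c) hR, ← sum_mul,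
            ← ofReal_ofNat 2, ← ofReal_mul zero_le_two, sq]
  · simp only [S, mem_insert, mem_image, mem_univ, true_and, not_or, not_exists] at hm
    rw [hsupp m hm.1 fun c h => hm.2 c h.symm, zero_tsub]

end Poisson

section Game

variable {E T N : Type*}

noncomputable def playerMass (r : N → ℝ) (σ : N → Finset E → ℝ) (i : N) (x : Bool × Finset E) :
    ℝ≥0∞ :=
  ENNReal.ofReal ((if x.1 then r i else 1 - r i) * σ i x.2)

abbrev StratPair (strat : T → Finset (Finset E)) : Type _ := {c : T × Finset E // c.2 ∈ strat c.1}

@[to_additive]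
lemma prod_stratPair [Fintype E] [Fintype T] (strat : T → Finset (Finset E)) {M : Type*}
    [CommMonoid M] (f : T × Finset E → M) :
    ∏ c : StratPair strat, f c.1 = ∏ t, ∏ s ∈ strat t, f (t, s) := by
  rw [← prod_subtype (univ.filter fun c : T × Finset E => c.2 ∈ strat c.1) (by simp),
    prod_filter, Fintype.prod_prod_type]
  exact prod_congr rfl fun t _ => prod_ite_mem univ (strat t) _ |>.trans (by rw [univ_inter])

theorem _root_.IsMixed.sum_eq_one [Fintype E] {strat : T → Finset (Finset E)} {tm : N → T}
    {σ : N → Finset E → ℝ} (hσ : IsMixed strat tm σ) (i : N) : ∑ s, σ i s = 1 :=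
  (sum_subset (subset_univ _) fun s _ hs => hσ.2.1 i s hs).symm.trans (hσ.2.2 i)

section Player

variable (strat : T → Finset (Finset E)) (tm : N → T) (r : N → ℝ) (σ : N → Finset E → ℝ)

-- In the notation of the header, `playerFlow` is `X_i` as a function of `(U_i, S_i)`, and
-- `playerRate i c` is `μ_{i,c}`.
noncomputable def playerFlow (i : N) (x : Bool × Finset E) (c : StratPair strat) : ℕ :=
  if tm i = c.1.1 ∧ x.1 ∧ x.2 = c.1.2 then 1 else 0

noncomputable def playerRate (i : N) (c : StratPair strat) : ℝ :=
  if tm i = c.1.1 then r i * σ i c.1.2 else 0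

variable {strat tm r σ}

lemma playerFlow_eq_single_iff (i : N) (x : Bool × Finset E) (c : StratPair strat) :
    playerFlow strat tm i x = Pi.single c 1 ↔ tm i = c.1.1 ∧ x = (true, c.1.2) := by
  constructor
  · intro h
    have hc := congrFun h c
    simp only [playerFlow, Pi.single_eq_same, ite_eq_left_iff, zero_ne_one, imp_false,
      not_not] at hc
    exact ⟨hc.1, Prod.ext (by simpa using hc.2.1) hc.2.2⟩
  · rintro ⟨h, rfl⟩
    funext c'
    by_cases hc : c' = c
    · subst hc
      simp [playerFlow, h]
    · simp only [playerFlow, Pi.single_eq_of_ne hc, h, true_and, ite_eq_right_iff]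
      rintro ⟨h1, h2⟩
      exact absurd (Subtype.ext (Prod.ext h1.symm h2.symm)) hc

lemma playerFlow_eq_zero_or_single (i : N) (x : Bool × Finset E) :
    playerFlow strat tm i x = 0 ∨ ∃ c, playerFlow strat tm i x = Pi.single c 1 := by
  by_cases h : x.1 ∧ x.2 ∈ strat (tm i)
  · exact Or.inr ⟨⟨(tm i, x.2), h.2⟩, (playerFlow_eq_single_iff i x _).2 ⟨rfl, by simp [← h.1]⟩⟩
  · refine Or.inl (funext fun c => if_neg ?_)
    rintro ⟨h1, h2, h3⟩
    exact h ⟨h2, h1 ▸ h3 ▸ c.2⟩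

variable [Fintype E]

lemma tsum_playerMass (hr0 : ∀ i, 0 ≤ r i) (hr1 : ∀ i, r i ≤ 1) (hσ : IsMixed strat tm σ)
    (i : N) : ∑' x, playerMass r σ i x = 1 := by
  have hσ0 := hσ.1 i
  rw [tsum_fintype, Fintype.sum_prod_type, Fintype.sum_bool]
  simp only [playerMass, if_true, Bool.false_eq_true, if_false]
  rw [← ofReal_sum_of_nonneg fun s _ => mul_nonneg (hr0 i) (hσ0 s),
    ← ofReal_sum_of_nonneg fun s _ => mul_nonneg (sub_nonneg.2 (hr1 i)) (hσ0 s), ← mul_sum,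
    ← mul_sum, hσ.sum_eq_one, mul_one, mul_one, ← ofReal_add (hr0 i) (sub_nonneg.2 (hr1 i)),
    add_sub_cancel, ofReal_one]

lemma playerRate_nonneg (hr0 : ∀ i, 0 ≤ r i) (hσ : IsMixed strat tm σ) (i : N)
    (c : StratPair strat) : 0 ≤ playerRate strat tm r σ i c := by
  unfold playerRate
  split_ifs
  exacts [mul_nonneg (hr0 i) (hσ.1 i _), le_rfl]

variable [Fintype T]

lemma sum_playerRate (hσ : IsMixed strat tm σ) (i : N) :
    ∑ c, playerRate strat tm r σ i c = r i := by
  simp only [playerRate, sum_stratPair strat fun c : T × Finset E =>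
    if tm i = c.1 then r i * σ i c.2 else 0]
  simp [sum_ite_irrel, ← mul_sum, hσ.2.2 i]

lemma massMap_playerFlow_single (i : N) (c : StratPair strat) :
    massMap (playerFlow strat tm i) (playerMass r σ i) (Pi.single c 1) =
      ENNReal.ofReal (playerRate strat tm r σ i c) := by
  simp only [massMap, playerFlow_eq_single_iff, playerRate]
  by_cases h : tm i = c.1.1
  · simp [h, playerMass]
  · simp [h]

lemma l1Dist_playerFlow_le (hr0 : ∀ i, 0 ≤ r i) (hr1 : ∀ i, r i ≤ 1) (hσ : IsMixed strat tm σ)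
    (i : N) :
    l1Dist (massMap (playerFlow strat tm i) (playerMass r σ i))
      (multiPoisson (playerRate strat tm r σ i)) ≤ ENNReal.ofReal (2 * r i ^ 2) := by
  have hp : ∑' m, massMap (playerFlow strat tm i) (playerMass r σ i) m = 1 :=
    (tsum_massMap _ _).trans (tsum_playerMass hr0 hr1 hσ i)
  have key := l1Dist_multiPoisson_le_of_unitVector hp (playerRate_nonneg hr0 hσ i) ?_
    (massMap_playerFlow_single i)
  · rwa [sum_playerRate hσ i] at key
  intro m hm0 hm1
  refine ENNReal.tsum_eq_zero.2 fun x => if_neg fun hx => ?_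
  rcases playerFlow_eq_zero_or_single (strat := strat) (tm := tm) i x with h | ⟨c, h⟩
  exacts [hm0 (hx ▸ h), hm1 c (hx ▸ h)]

end Player

section Flows

variable [Fintype E] [Fintype N] (strat : T → Finset (Finset E)) (tm : N → T)

noncomputable def flowVec (u : N → Bool) (a : N → Finset E) (c : StratPair strat) : ℕ :=
  bflow tm c.1.1 c.1.2 u a

lemma flowVec_eq_sum_playerFlow (x : N → Bool × Finset E) :
    flowVec strat tm (fun i => (x i).1) (fun i => (x i).2) = ∑ i, playerFlow strat tm i (x i) := by
  funext c
  rw [Finset.sum_apply]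
  rfl

variable [Fintype T]

noncomputable def flowLaw (r : N → ℝ) (σ : N → Finset E → ℝ) : (StratPair strat → ℕ) → ℝ≥0∞ :=
  massMap (fun x : N → Bool × Finset E => flowVec strat tm (fun i => (x i).1) (fun i => (x i).2))
    (massPi (playerMass r σ))

variable {strat tm} {r : N → ℝ} {σ : N → Finset E → ℝ}

lemma tsum_flowLaw (hr0 : ∀ i, 0 ≤ r i) (hr1 : ∀ i, r i ≤ 1) (hσ : IsMixed strat tm σ) :
    ∑' m, flowLaw strat tm r σ m = 1 := by
  rw [flowLaw, tsum_massMap, tsum_massPi]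
  exact prod_eq_one fun i _ => tsum_playerMass hr0 hr1 hσ i

lemma l1Dist_flowLaw_le (hr0 : ∀ i, 0 ≤ r i) (hr1 : ∀ i, r i ≤ 1) (hσ : IsMixed strat tm σ) :
    l1Dist (flowLaw strat tm r σ) (multiPoisson (∑ i, playerRate strat tm r σ i)) ≤
      ENNReal.ofReal (2 * ∑ i, r i ^ 2) := by
  have hlaw : flowLaw strat tm r σ = massMap (fun m : N → StratPair strat → ℕ => ∑ i, m i)
      (massPi fun i => massMap (playerFlow strat tm i) (playerMass r σ i)) := by
    rw [← massMap_massPi, massMap_comp]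
    exact congrArg₂ massMap (funext (flowVec_eq_sum_playerFlow strat tm)) rfl
  rw [hlaw, ← massMap_sum_massPi_multiPoisson (playerRate_nonneg hr0 hσ)]
  refine (l1Dist_massMap_le _ _ _).trans <| (l1Dist_massPi_le
    (fun i => ((tsum_massMap _ _).trans (tsum_playerMass hr0 hr1 hσ i)).le)
    (fun i => (tsum_multiPoisson (playerRate_nonneg hr0 hσ i)).le)).trans ?_
  rw [mul_sum, ofReal_sum_of_nonneg fun i _ => by positivity]
  exact sum_le_sum fun i _ => l1Dist_playerFlow_le hr0 hr1 hσ i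

lemma bexpVal_ite_eq_toReal_massMap {Y : Type*} [DecidableEq Y]
    (hr0 : ∀ i, 0 ≤ r i) (hr1 : ∀ i, r i ≤ 1) (hσ : ∀ i s, 0 ≤ σ i s)
    (F : (N → Bool) → (N → Finset E) → Y) (y : Y) (P : (N → Bool) → (N → Finset E) → Prop)
    [∀ u a, Decidable (P u a)] (hP : ∀ u a, P u a ↔ F u a = y) :
    bexpVal r σ (fun u a => if P u a then 1 else 0) =
      (massMap (fun x => F (fun i => (x i).1) (fun i => (x i).2)) (massPi (playerMass r σ))
        y).toReal := by
  have hw : ∀ i (x : Bool × Finset E), 0 ≤ (if x.1 then r i else 1 - r i) * σ i x.2 :=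
    fun i x => mul_nonneg (by split_ifs <;> linarith [hr0 i, hr1 i]) (hσ i x.2)
  rw [bexpVal, ← Fintype.sum_prod_type', ← (Equiv.arrowProdEquivProdArrow N _ _).sum_comp,
    massMap, tsum_fintype, toReal_sum fun x _ => by
      split_ifs
      exacts [prod_ne_top fun _ _ => ofReal_ne_top, zero_ne_top]]
  refine sum_congr rfl fun x _ => ?_
  change (∏ i, (if (x i).1 then r i else 1 - r i) * σ i (x i).2) *
    (if P (fun i => (x i).1) (fun i => (x i).2) then 1 else 0) = _
  by_cases h : F (fun i => (x i).1) (fun i => (x i).2) = y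
  · rw [if_pos ((hP _ _).2 h), if_pos h, mul_one, massPi, toReal_prod]
    exact prod_congr rfl fun i _ => (toReal_ofReal (hw i (x i))).symm
  · rw [if_neg (mt (hP _ _).1 h), if_neg h, mul_zero, toReal_zero]

lemma bexpVal_ite_bflow_eq (hr0 : ∀ i, 0 ≤ r i) (hr1 : ∀ i, r i ≤ 1)
    (hσ : IsMixed strat tm σ) {t : T} {s : Finset E} (hs : s ∈ strat t) (k : ℕ) :
    bexpVal r σ (fun u a => if bflow tm t s u a = k then 1 else 0) =
      (massMap (fun m => m ⟨(t, s), hs⟩) (flowLaw strat tm r σ) k).toReal := by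
  rw [flowLaw, massMap_comp]
  exact bexpVal_ite_eq_toReal_massMap hr0 hr1 hσ.1 (bflow tm t s) k _ fun _ _ => Iff.rfl

lemma bexpVal_ite_forall_bflow_eq (hr0 : ∀ i, 0 ≤ r i) (hr1 : ∀ i, r i ≤ 1)
    (hσ : IsMixed strat tm σ) (k : T → Finset E → ℕ) :
    bexpVal r σ (fun u a => if ∀ t, ∀ s ∈ strat t, bflow tm t s u a = k t s then 1 else 0) =
      (flowLaw strat tm r σ fun c => k c.1.1 c.1.2).toReal :=
  bexpVal_ite_eq_toReal_massMap hr0 hr1 hσ.1 (flowVec strat tm) _ _ fun u a => by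
    simp [funext_iff, flowVec]

lemma prod_poiPMF_eq_toReal_multiPoisson {y : T → Finset E → ℝ}
    (hy : ∀ c : StratPair strat, 0 ≤ y c.1.1 c.1.2) (k : T → Finset E → ℕ) :
    ∏ t, ∏ s ∈ strat t, poiPMF (y t s) (k t s) =
      (multiPoisson (fun c : StratPair strat => y c.1.1 c.1.2) fun c => k c.1.1 c.1.2).toReal := by
  rw [multiPoisson_apply hy, toReal_ofReal (prod_nonneg fun c _ => poiPMF_nonneg (hy c) _),
    prod_stratPair strat fun c => poiPMF (y c.1 c.2) (k c.1 c.2)]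

end Flows

end Game

lemma tendsto_sum_sq_of_forall_lt {ι : ℕ → Type*} [∀ n, Fintype (ι n)] {x : ∀ n, ι n → ℝ}
    (hx : ∀ n i, 0 ≤ x n i) (hmax : ∀ ε > 0, ∀ᶠ n in atTop, ∀ i, x n i < ε) {L : ℝ}
    (hsum : Tendsto (fun n => ∑ i, x n i) atTop (𝓝 L)) :
    Tendsto (fun n => ∑ i, x n i ^ 2) atTop (𝓝 0) := by
  refine tendsto_order.2 ⟨fun a ha => Eventually.of_forall fun n =>
    ha.trans_le (sum_nonneg fun i _ => sq_nonneg _), fun ε hε => ?_⟩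
  have hL : 0 < |L| + 1 := by positivity
  filter_upwards [hmax (ε / (|L| + 1)) (by positivity),
    hsum.eventually_lt_const ((le_abs_self L).trans_lt (lt_add_one _))] with n hn hS
  calc ∑ i, x n i ^ 2 ≤ ∑ i, ε / (|L| + 1) * x n i :=
        sum_le_sum fun i _ => by rw [sq]; exact mul_le_mul_of_nonneg_right (hn i).le (hx n i)
    _ = ε / (|L| + 1) * ∑ i, x n i := (mul_sum _ _ _).symm
    _ < ε / (|L| + 1) * (|L| + 1) := mul_lt_mul_of_pos_left hS (by positivity)
    _ = ε := div_mul_cancel₀ _ hL.ne'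

lemma tendsto_l1Dist_flowLaw {E T : Type*} [Fintype E] [Fintype T]
    {strat : T → Finset (Finset E)} {P : ℕ → Type*} [∀ n, Fintype (P n)] {tm : ∀ n, P n → T}
    {r : ∀ n, P n → ℝ} {σ : ∀ n, P n → Finset E → ℝ} (hr0 : ∀ n i, 0 ≤ r n i)
    (hr1 : ∀ n i, r n i ≤ 1) (hσ : ∀ n, IsMixed strat (tm n) (σ n))
    (hrmax : ∀ ε > 0, ∀ᶠ n in atTop, ∀ i, r n i < ε) {Y : StratPair strat → ℝ}
    (hY0 : ∀ c, 0 ≤ Y c)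
    (hY : ∀ c, Tendsto (fun n => ∑ i, playerRate strat (tm n) (r n) (σ n) i c) atTop (𝓝 (Y c))) :
    Tendsto (fun n => l1Dist (flowLaw strat (tm n) (r n) (σ n)) (multiPoisson Y)) atTop (𝓝 0) := by
  have hrate0 : ∀ n c, 0 ≤ (∑ i, playerRate strat (tm n) (r n) (σ n) i) c := fun n c => by
    rw [Finset.sum_apply]
    exact sum_nonneg fun i _ => playerRate_nonneg (hr0 n) (hσ n) i c
  have hbound : ∀ n, l1Dist (flowLaw strat (tm n) (r n) (σ n)) (multiPoisson Y) ≤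
      ENNReal.ofReal (2 * ∑ i, r n i ^ 2) + ENNReal.ofReal
        (2 * ∑ c, |∑ i, playerRate strat (tm n) (r n) (σ n) i c - Y c|) := fun n => by
    refine (l1Dist_triangle _ _ _).trans (add_le_add (l1Dist_flowLaw_le (hr0 n) (hr1 n) (hσ n))
      ((l1Dist_multiPoisson_le (hrate0 n) hY0).trans_eq ?_))
    simp only [Finset.sum_apply]
  have hsum : Tendsto (fun n => ∑ i, r n i) atTop (𝓝 (∑ c, Y c)) := by
    have h : ∀ n, ∑ i, r n i = ∑ c, ∑ i, playerRate strat (tm n) (r n) (σ n) i c := fun n => by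
      rw [sum_comm]
      exact sum_congr rfl fun i _ => (sum_playerRate (hσ n) i).symm
    simpa only [h] using tendsto_finsetSum _ fun c _ => hY c
  have hdev : Tendsto (fun n => ∑ c, |∑ i, playerRate strat (tm n) (r n) (σ n) i c - Y c|)
      atTop (𝓝 0) := by
    simpa using tendsto_finsetSum univ fun c _ => ((hY c).sub_const (Y c)).abs
  have hsq := tendsto_sum_sq_of_forall_lt hr0 hrmax hsum
  have hlim := (ENNReal.tendsto_ofReal (hsq.const_mul 2)).add
    (ENNReal.tendsto_ofReal (hdev.const_mul 2))
  simp only [mul_zero, ofReal_zero, add_zero] at hlim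
  exact tendsto_of_tendsto_of_tendsto_of_le_of_le tendsto_const_nhds hlim (fun n => zero_le)
    hbound

end BernoulliCongestion

open BernoulliCongestion

theorem stmt15_general {E T : Type*} [Fintype E] [Fintype T]
    (strat : T → Finset (Finset E))
    (P : ℕ → Type) [∀ n, Fintype (P n)]
    (r : ∀ n, P n → ℝ) (hr : ∀ n i, 0 < r n i ∧ r n i < 1)
    (tm : ∀ n, P n → T)
    (hrmax : ∀ ε > (0 : ℝ), ∀ᶠ n in atTop, ∀ i : P n, r n i < ε)
    (σ : ∀ n, P n → Finset E → ℝ) (hmix : ∀ n, IsMixed strat (tm n) (σ n))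
    (y : T → Finset E → ℝ)
    (hy : ∀ t, ∀ s ∈ strat t,
      Tendsto (fun n => ∑ i : P n, if tm n i = t then r n i * σ n i s else 0)
        atTop (nhds (y t s))) :
    (∀ t, ∀ s ∈ strat t,
      Tendsto (fun n => (1 / 2) * ∑' k : ℕ,
          |bexpVal (r n) (σ n)
              (fun u a => if bflow (tm n) t s u a = k then 1 else 0) -
            poiPMF (y t s) k|)
        atTop (nhds 0)) ∧
    (∀ k : T → Finset E → ℕ,
      Tendsto (fun n => bexpVal (r n) (σ n)
          (fun u a => if ∀ t, ∀ s ∈ strat t, bflow (tm n) t s u a = k t s then 1 else 0))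
        atTop (nhds (∏ t, ∏ s ∈ strat t, poiPMF (y t s) (k t s)))) := by
  have hr0 : ∀ n i, 0 ≤ r n i := fun n i => (hr n i).1.le
  have hr1 : ∀ n i, r n i ≤ 1 := fun n i => (hr n i).2.le
  set Y : StratPair strat → ℝ := fun c => y c.1.1 c.1.2
  have hY : ∀ c, Tendsto (fun n => ∑ i, playerRate strat (tm n) (r n) (σ n) i c) atTop (𝓝 (Y c)) :=
    fun c => hy _ _ c.2
  have hY0 : ∀ c, 0 ≤ Y c := fun c => ge_of_tendsto' (hY c) fun n =>
    Finset.sum_nonneg fun i _ => playerRate_nonneg (hr0 n) (hmix n) i c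
  have hlaw := tendsto_l1Dist_flowLaw hr0 hr1 hmix hrmax hY0 hY
  have hp := fun n => tsum_flowLaw (hr0 n) (hr1 n) (hmix n)
  have hq := tsum_multiPoisson hY0
  refine ⟨fun t s hs => ?_, fun k => ?_⟩
  · have h := (tendsto_tsum_abs_massMap_of_l1Dist hp hq hlaw fun m => m ⟨(t, s), hs⟩).const_mul
      (1 / 2)
    rw [mul_zero] at h
    refine h.congr fun n => ?_
    simp only [bexpVal_ite_bflow_eq (hr0 n) (hr1 n) (hmix n) hs,
      ← poiPMF_eq_toReal_massMap_multiPoisson hY0]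
    rfl
  · rw [prod_poiPMF_eq_toReal_multiPoisson hY0]
    simp only [bexpVal_ite_forall_bflow_eq (hr0 _) (hr1 _) (hmix _)]
    exact tendsto_toReal_apply_of_l1Dist hp hq hlaw _

/-- Poisson limit of Bernoulli congestion games: if the number of players tends to infinity,
the maximal participation probability tends to zero, and the expected flows converge to
`y_{t,s}`, then each random strategy flow converges in total variation to a
`Poisson(y_{t,s})` law, and the limiting family is mutually independent (the joint law
converges to the product of the Poisson laws). -/
theorem stmt15 {E T : Type*} [Fintype E] [Fintype T]
    (strat : T → Finset (Finset E))
    (P : ℕ → Type) [∀ n, Fintype (P n)]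
    (r : ∀ n, P n → ℝ) (hr : ∀ n i, 0 < r n i ∧ r n i < 1)
    (tm : ∀ n, P n → T)
    (hcard : Tendsto (fun n => (Fintype.card (P n) : ℝ)) atTop atTop)
    (hrmax : ∀ ε > (0 : ℝ), ∀ᶠ n in atTop, ∀ i : P n, r n i < ε)
    (σ : ∀ n, P n → Finset E → ℝ) (hmix : ∀ n, IsMixed strat (tm n) (σ n))
    (y : T → Finset E → ℝ)
    (hy : ∀ t, ∀ s ∈ strat t,
      Tendsto (fun n => ∑ i : P n, if tm n i = t then r n i * σ n i s else 0)
        atTop (nhds (y t s))) :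
    (∀ t, ∀ s ∈ strat t,
      Tendsto (fun n => (1 / 2) * ∑' k : ℕ,
          |bexpVal (r n) (σ n)
              (fun u a => if bflow (tm n) t s u a = k then 1 else 0) -
            poiPMF (y t s) k|)
        atTop (nhds 0)) ∧
    (∀ k : T → Finset E → ℕ,
      Tendsto (fun n => bexpVal (r n) (σ n)
          (fun u a => if ∀ t, ∀ s ∈ strat t, bflow (tm n) t s u a = k t s then 1 else 0))
        atTop (nhds (∏ t, ∏ s ∈ strat t, poiPMF (y t s) (k t s)))) :=
  stmt15_general strat P r hr tm hrmax σ hmix y hy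
end

section
/- In a Poisson game where player counts per type are independent N_t ~ Poisson(d_t) with d_t > 0, costs are C(Y^{-t} | t, s) = ∑_{e ∈ s} c_e(1 + X_e^{-t}) with X_e^{-t} the aggregate resource load of the other players, and costs satisfy the moment condition E[|Δ²c_e(1+V)|] < ∞ for V ~ Poisson(α), α > d_tot: a symmetric type-dependent mixed strategy profile σ = (σ_t) is an equilibrium of the Poisson game if and only if the flow-load pair (y, x) defined by y_{t,s} = d_t σ_t(s) and x_e = ∑_t ∑_{s ∈ S_t} y_{t,s} 1{e ∈ s} is a Wardrop equilibrium of the nonatomic congestion game with costs ĉ_e(x) = E[c_e(1 + Poisson(x))] and demands (d_t). -/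
open scoped BigOperators Classical

section Defs

variable {E T : Type*}

/-- Joint pmf of independent Poisson strategy flows with means `y t s`. -/
noncomputable def jointPoi [Fintype E] [Fintype T] (y : T → Finset E → ℝ)
    (m : T → Finset E → ℕ) : ℝ :=
  ∏ t, ∏ s : Finset E, poiPMF (y t s) (m t s)

/-- The resource load induced by the strategy flows `m`. -/
noncomputable def loadOf [Fintype E] [Fintype T] (strat : T → Finset (Finset E))
    (m : T → Finset E → ℕ) (e : E) : ℕ :=
  ∑ t, ∑ s ∈ strat t, if e ∈ s then m t s else 0

/-- Expected cost of a player of type `t` choosing strategy `s` in the Poisson game: the other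
players' strategy flows are independent Poisson with means `y`, and the player pays
`∑_{e ∈ s} c_e(1 + X_e^{-t})` where `X_e^{-t}` is the aggregate load of the others. -/
noncomputable def poiExpCost [Fintype E] [Fintype T] (strat : T → Finset (Finset E))
    (c : E → ℕ → ℝ) (y : T → Finset E → ℝ) (s : Finset E) : ℝ :=
  ∑' m : T → Finset E → ℕ, jointPoi y m * ∑ e ∈ s, c e (1 + loadOf strat m e)

/-- The auxiliary cost `ĉ(x) = E[c(1 + X)]`, `X ~ Poisson(x)`. -/
noncomputable def chat (c : ℕ → ℝ) (x : ℝ) : ℝ := ∑' k : ℕ, c (1 + k) * poiPMF x k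

end Defs

/-!
Make the strategy flows `m t s` independent `Poisson(y t s)` random variables (`flowMeasure`).
The load on a resource is then a sum of independent Poisson variables, hence `Poisson(x_e)` with
`x_e` the load of the flow `y`, and the expected cost of a strategy is `∑_{e ∈ s} ĉ_e(x_e)`.
So both equilibrium notions compare the same numbers, and `σ_t(s) > 0 ↔ y_{t,s} > 0` as `d_t > 0`.
The moment condition is what makes `c_e(1 + ·)` integrable against `Poisson(x_e)`, since
`x_e ≤ ∑ d_t < α`.
-/

open MeasureTheory ProbabilityTheory Finset
open scoped NNReal Nat

lemma poiPMF_eq_measureReal (r : ℝ≥0) (n : ℕ) : poiPMF r n = Po(r).real {n} :=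
  (poissonMeasure_real_singleton r n).symm

lemma chat_eq_integral (c : ℕ → ℝ) (r : ℝ≥0) : chat c r = ∫ k, c (1 + k) ∂Po(r) := by
  rw [integral_poissonMeasure, chat]
  exact tsum_congr fun k => mul_comm _ _

lemma ProbabilityTheory.poissonMeasure_zero : Po(0) = Measure.dirac 0 := by
  ext s -
  simp only [poissonMeasure, Measure.sum_apply _ (MeasurableSet.of_discrete), Measure.smul_apply,
    smul_eq_mul, NNReal.coe_zero, neg_zero, Real.exp_zero, one_mul, Measure.dirac_apply]
  rw [tsum_eq_single 0 fun i hi => by simp [hi]]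
  simp

lemma ProbabilityTheory.iIndepFun.hasLaw_sum_poissonMeasure {Ω ι : Type*}
    {mΩ : MeasurableSpace Ω} {P : Measure Ω} [IsProbabilityMeasure P] {X : ι → Ω → ℕ}
    {r : ι → ℝ≥0} (hX : iIndepFun X P) (hmeas : ∀ i, Measurable (X i))
    (hlaw : ∀ i, HasLaw (X i) Po(r i) P) (s : Finset ι) :
    HasLaw (∑ i ∈ s, X i) Po(∑ i ∈ s, r i) P := by
  classical
  induction s using Finset.induction_on with
  | empty =>
    rw [Finset.sum_empty, Finset.sum_empty, poissonMeasure_zero]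
    exact ⟨aemeasurable_const, by simp [Pi.zero_def]⟩
  | insert j s hj ih =>
    rw [Finset.sum_insert hj, Finset.sum_insert hj, add_comm (X j), add_comm (r j)]
    exact IndepFun.hasLaw_add_poissonMeasure (hX.indepFun_finsetSum_of_notMem hmeas hj) ih
      (hlaw j)

lemma pow_div_factorial_add_le_s18 {x : ℝ} (hx : 0 ≤ x) (i l : ℕ) :
    x ^ (i + l) / (i + l)! ≤ x ^ i / i ! * (x ^ l / l !) := by
  rw [pow_add, div_mul_div_comm]
  refine div_le_div_of_nonneg_left (by positivity) (by positivity) ?_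
  exact_mod_cast Nat.le_of_dvd (Nat.factorial_pos _) (Nat.factorial_mul_factorial_dvd_factorial_add i l)

lemma abs_sub_le_sum_abs_secondDiff (a : ℕ → ℝ) (k : ℕ) :
    |a (k + 1) - a k| ≤ |a 1 - a 0| + ∑ i ∈ range k, |a (i + 2) - 2 * a (i + 1) + a i| := by
  induction k with
  | zero => simp
  | succ k ih =>
    rw [sum_range_succ]
    calc |a (k + 2) - a (k + 1)|
        = |(a (k + 1) - a k) + (a (k + 2) - 2 * a (k + 1) + a k)| := by ring_nf
      _ ≤ |a (k + 1) - a k| + |a (k + 2) - 2 * a (k + 1) + a k| := abs_add_le _ _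
      _ ≤ _ := by linarith

lemma abs_le_sum_abs_secondDiff (a : ℕ → ℝ) (k : ℕ) :
    |a k| ≤ |a 0| + k * |a 1 - a 0| +
      ∑ p ∈ antidiagonal k, |a (p.1 + 2) - 2 * a (p.1 + 1) + a p.1| * p.2 := by
  set w : ℕ → ℝ := fun i => |a (i + 2) - 2 * a (i + 1) + a i|
  induction k with
  | zero => simp
  | succ k ih =>
    have hsucc : ∑ p ∈ antidiagonal (k + 1), w p.1 * p.2 =
        ∑ p ∈ antidiagonal k, w p.1 * p.2 + ∑ i ∈ range (k + 1), w i := by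
      rw [Nat.sum_antidiagonal_succ', ← Nat.sum_antidiagonal_eq_sum_range_succ (fun i _ => w i)]
      push_cast
      simp only [mul_add, mul_one, sum_add_distrib]
      ring
    have hw : ∑ i ∈ range k, w i ≤ ∑ i ∈ range (k + 1), w i :=
      sum_le_sum_of_subset_of_nonneg (range_subset_range.mpr k.le_succ) fun i _ _ => abs_nonneg _
    calc |a (k + 1)| ≤ |a k| + |a (k + 1) - a k| := by
          simpa using abs_add_le (a k) (a (k + 1) - a k)
      _ ≤ _ := by
          rw [hsucc]
          push_cast
          linarith [abs_sub_le_sum_abs_secondDiff a k]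

lemma summable_mul_pow_div_factorial_of_le {w : ℕ → ℝ} (hw : 0 ≤ w) {x α : ℝ} (hx : 0 ≤ x)
    (hxα : x ≤ α) (h : Summable fun i => w i * poiPMF α i) :
    Summable fun i => w i * (x ^ i / i !) := by
  refine (h.mul_left (Real.exp α)).of_nonneg_of_le (fun i => mul_nonneg (hw i) (by positivity))
    fun i => ?_
  have hpoi : Real.exp α * poiPMF α i = α ^ i / i ! := by
    rw [poiPMF, mul_div_assoc', ← mul_assoc, ← Real.exp_add, add_neg_cancel, Real.exp_zero,
      one_mul]
  calc w i * (x ^ i / i !) ≤ w i * (α ^ i / i !) := by have := hw i; gcongr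
    _ = Real.exp α * (w i * poiPMF α i) := by rw [← hpoi]; ring

lemma summable_natCast_mul_pow_div_factorial {x : ℝ} (hx : 0 ≤ x) :
    Summable fun l : ℕ => l * (x ^ l / l !) := by
  refine (Real.summable_pow_div_factorial (2 * x)).of_nonneg_of_le (fun l => by positivity)
    fun l => ?_
  have hl : (l : ℝ) ≤ 2 ^ l := by exact_mod_cast (Nat.lt_two_pow_self).le
  calc l * (x ^ l / l !) ≤ 2 ^ l * (x ^ l / l !) := by gcongr
    _ = (2 * x) ^ l / l ! := by rw [mul_pow, mul_div_assoc]

/- By `abs_le_sum_abs_secondDiff` and `pow_div_factorial_add_le`, `|a k| x^k/k!` is dominated by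
a Cauchy product of the summable series `|Δ²a i| x^i/i!` and `l x^l/l!`. -/
lemma integrable_poissonMeasure_of_summable_secondDiff {a : ℕ → ℝ} {r : ℝ≥0} {α : ℝ}
    (hrα : (r : ℝ) ≤ α)
    (h : Summable fun k => |a (k + 2) - 2 * a (k + 1) + a k| * poiPMF α k) :
    Integrable a Po(r) := by
  set x : ℝ := (r : ℝ)
  have hx : 0 ≤ x := r.2
  set w : ℕ → ℝ := fun i => |a (i + 2) - 2 * a (i + 1) + a i|
  set f : ℕ → ℝ := fun i => w i * (x ^ i / i !)
  set g : ℕ → ℝ := fun l => l * (x ^ l / l !)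
  have hf : Summable f :=
    summable_mul_pow_div_factorial_of_le (fun i => abs_nonneg _) hx hrα h
  have hg : Summable g := summable_natCast_mul_pow_div_factorial hx
  have hfg := summable_sum_mul_antidiagonal_of_summable_mul
    (hf.mul_of_nonneg hg (fun i => by positivity) fun l => by positivity)
  have hbound : ∀ k, |a k| * (x ^ k / k !) ≤
      |a 0| * (x ^ k / k !) + |a 1 - a 0| * g k + ∑ p ∈ antidiagonal k, f p.1 * g p.2 := by
    intro k
    have hterm : ∀ p ∈ antidiagonal k, w p.1 * p.2 * (x ^ k / k !) ≤ f p.1 * g p.2 := by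
      intro p hp
      rw [HasAntidiagonal.mem_antidiagonal] at hp
      subst hp
      calc w p.1 * p.2 * (x ^ (p.1 + p.2) / (p.1 + p.2)!)
          ≤ w p.1 * p.2 * (x ^ p.1 / p.1 ! * (x ^ p.2 / p.2 !)) := by
            gcongr
            exact pow_div_factorial_add_le_s18 hx _ _
        _ = f p.1 * g p.2 := by ring
    calc |a k| * (x ^ k / k !)
        ≤ (|a 0| + k * |a 1 - a 0| + ∑ p ∈ antidiagonal k, w p.1 * p.2) * (x ^ k / k !) := by
          gcongr
          exact abs_le_sum_abs_secondDiff a k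
      _ = |a 0| * (x ^ k / k !) + |a 1 - a 0| * g k +
            ∑ p ∈ antidiagonal k, w p.1 * p.2 * (x ^ k / k !) := by
          rw [add_mul, sum_mul]; ring
      _ ≤ _ := add_le_add_right (sum_le_sum hterm) _
  have hsum : Summable fun k => |a k| * (x ^ k / k !) :=
    (((Real.summable_pow_div_factorial x).mul_left |a 0|).add (hg.mul_left _) |>.add hfg)
      |>.of_nonneg_of_le (fun k => by positivity) hbound
  rw [integrable_poissonMeasure_iff]
  exact (hsum.mul_left (Real.exp (-x))).congr fun k => by rw [Real.norm_eq_abs]; ring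

section PoissonGame

variable {E T : Type*}

noncomputable def flowMeasure (y : T → Finset E → ℝ≥0) : Measure (T → Finset E → ℕ) :=
  Measure.infinitePi fun t => Measure.infinitePi fun s => Po(y t s)

instance (y : T → Finset E → ℝ≥0) : IsProbabilityMeasure (flowMeasure y) := by
  unfold flowMeasure; infer_instance

variable [Fintype T]

noncomputable def flowLoad (strat : T → Finset (Finset E)) (y : T → Finset E → ℝ≥0) (e : E) :
    ℝ≥0 :=
  ∑ t, ∑ s ∈ strat t, if e ∈ s then y t s else 0

lemma coe_flowLoad (strat : T → Finset (Finset E)) (y : T → Finset E → ℝ≥0) (e : E) :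
    (flowLoad strat y e : ℝ) = ∑ t, ∑ s ∈ strat t, if e ∈ s then (y t s : ℝ) else 0 := by
  push_cast [flowLoad, apply_ite]
  rfl

lemma flowLoad_le_sum (strat : T → Finset (Finset E)) (y : T → Finset E → ℝ≥0) (e : E) :
    flowLoad strat y e ≤ ∑ t, ∑ s ∈ strat t, y t s :=
  sum_le_sum fun t _ => sum_le_sum fun s _ => by split_ifs <;> simp

variable [Fintype E]

lemma jointPoi_eq_flowMeasure_real (y : T → Finset E → ℝ≥0) (m : T → Finset E → ℕ) :
    jointPoi (fun t s => (y t s : ℝ)) m = (flowMeasure y).real {m} := by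
  simp only [jointPoi, flowMeasure, measureReal_def, Measure.infinitePi_singleton_of_fintype,
    ENNReal.toReal_prod, poiPMF_eq_measureReal]

lemma sum_filter_mem_strat {M : Type*} [AddCommMonoid M] (strat : T → Finset (Finset E)) (e : E)
    (v : T → Finset E → M) :
    ∑ p ∈ univ.filter (fun p : T × Finset E => p.2 ∈ strat p.1 ∧ e ∈ p.2), v p.1 p.2 =
      ∑ t, ∑ s ∈ strat t, if e ∈ s then v t s else 0 := by
  simp [Finset.sum_filter, Fintype.sum_prod_type, ite_and, Finset.sum_ite_mem]

lemma hasLaw_loadOf (strat : T → Finset (Finset E)) (y : T → Finset E → ℝ≥0) (e : E) :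
    HasLaw (fun m => loadOf strat m e) Po(flowLoad strat y e) (flowMeasure y) := by
  have hindep : iIndepFun (fun (p : T × Finset E) (m : T → Finset E → ℕ) => m p.1 p.2)
      (flowMeasure y) :=
    iIndepFun_uncurry_infinitePi' (X := fun _ _ => id) (fun t s => Po(y t s))
      fun _ _ => measurable_id
  have hlaw : ∀ p : T × Finset E, HasLaw (fun m : T → Finset E → ℕ => m p.1 p.2)
      Po(y p.1 p.2) (flowMeasure y) := fun p =>
    ((measurePreserving_eval_infinitePi (fun s => Po(y p.1 s)) p.2).comp
      (measurePreserving_eval_infinitePi (fun t => Measure.infinitePi fun s => Po(y t s))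
        p.1)).hasLaw
  have hsum := hindep.hasLaw_sum_poissonMeasure (fun _ => by fun_prop) hlaw
    (univ.filter fun p : T × Finset E => p.2 ∈ strat p.1 ∧ e ∈ p.2)
  rw [sum_filter_mem_strat] at hsum
  rw [flowLoad]
  convert hsum using 1
  ext m
  rw [Finset.sum_apply, sum_filter_mem_strat]
  rfl

lemma poiExpCost_eq_sum_chat (strat : T → Finset (Finset E)) (c : E → ℕ → ℝ)
    (y : T → Finset E → ℝ≥0) (s : Finset E)
    (hint : ∀ e ∈ s, Integrable (fun k => c e (1 + k)) Po(flowLoad strat y e)) :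
    poiExpCost strat c (fun t s => (y t s : ℝ)) s = ∑ e ∈ s, chat (c e) (flowLoad strat y e) := by
  have hcomp : ∀ e ∈ s, Integrable (fun m => c e (1 + loadOf strat m e)) (flowMeasure y) :=
    fun e he => (((hasLaw_loadOf strat y e).map_eq ▸ hint e he).comp_aemeasurable
      (hasLaw_loadOf strat y e).aemeasurable :)
  calc poiExpCost strat c (fun t s => (y t s : ℝ)) s
      = ∫ m, ∑ e ∈ s, c e (1 + loadOf strat m e) ∂flowMeasure y := by
        rw [integral_countable (integrable_finsetSum s hcomp)]
        simp only [poiExpCost, jointPoi_eq_flowMeasure_real, smul_eq_mul]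
    _ = ∑ e ∈ s, ∫ m, c e (1 + loadOf strat m e) ∂flowMeasure y := integral_finsetSum s hcomp
    _ = ∑ e ∈ s, chat (c e) (flowLoad strat y e) := sum_congr rfl fun e _ => by
        rw [chat_eq_integral]
        exact (hasLaw_loadOf strat y e).integral_comp (f := fun k => c e (1 + k)) .of_discrete

end PoissonGame

theorem stmt18_general {E T : Type*} [Fintype E] [Fintype T]
    (strat : T → Finset (Finset E))
    (c : E → ℕ → ℝ)
    (d : T → ℝ) (hd : ∀ t, 0 < d t)
    (α : ℝ) (hα : ∑ t, d t < α)
    (hmom : ∀ e, Summable fun k =>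
      |c e (k + 3) - 2 * c e (k + 2) + c e (k + 1)| * poiPMF α k)
    (σt : T → Finset E → ℝ) (hσ0 : ∀ t s, 0 ≤ σt t s)
    (hσsupp : ∀ t s, s ∉ strat t → σt t s = 0)
    (hσ1 : ∀ t, ∑ s ∈ strat t, σt t s = 1) :
    (∀ t, ∀ s ∈ strat t, ∀ s' ∈ strat t, 0 < σt t s →
      poiExpCost strat c (fun t' s' => d t' * σt t' s') s ≤
        poiExpCost strat c (fun t' s' => d t' * σt t' s') s') ↔
    IsWE strat (fun e => chat (c e)) d (fun t s => d t * σt t s)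
      (fun e => ∑ t, ∑ s ∈ strat t, if e ∈ s then d t * σt t s else 0) := by
  let y : T → Finset E → ℝ≥0 := fun t s => ⟨d t * σt t s, mul_nonneg (hd t).le (hσ0 t s)⟩
  have hdemand : ∀ t, ∑ s ∈ strat t, d t * σt t s = d t := fun t => by
    rw [← mul_sum, hσ1, mul_one]
  have hload : ∀ e, (flowLoad strat y e : ℝ) ≤ α := fun e =>
    calc (flowLoad strat y e : ℝ) ≤ ∑ t, ∑ s ∈ strat t, (y t s : ℝ) := by
          exact_mod_cast flowLoad_le_sum strat y e
      _ = ∑ t, d t := sum_congr rfl fun t _ => hdemand t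
      _ ≤ α := hα.le
  have hcost : ∀ s, poiExpCost strat c (fun t' s' => d t' * σt t' s') s =
      ∑ e ∈ s, chat (c e) (∑ t, ∑ s ∈ strat t, if e ∈ s then d t * σt t s else 0) := fun s => by
    refine (poiExpCost_eq_sum_chat strat c y s fun e _ =>
      integrable_poissonMeasure_of_summable_secondDiff (hload e) ?_).trans
        (sum_congr rfl fun e _ => by rw [coe_flowLoad]; rfl)
    simpa only [add_comm 1, add_assoc] using hmom e
  simp only [IsWE, hcost]
  constructor
  · intro h
    refine ⟨⟨fun t s => (y t s).2, fun t s hs => by simp [hσsupp t s hs],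
      fun t => (hdemand t).symm, fun e => rfl⟩, fun t s hs s' hs' hy => h t s hs s' hs' ?_⟩
    exact pos_of_mul_pos_right hy (hd t).le
  · rintro ⟨-, h⟩ t s hs s' hs' hσ
    exact h t s hs s' hs' (mul_pos (hd t) hσ)

/-- Correspondence between Poisson games and Wardrop equilibria: a symmetric type-dependent
mixed strategy profile `σt` is an equilibrium of the Poisson game (with independent
`Poisson(d t)` player counts and costs `∑_{e ∈ s} c_e(1 + X_e^{-t})`) if and only if the
flow-load pair given by `y t s = d t · σt t s` is a Wardrop equilibrium of the nonatomic
congestion game with the auxiliary costs `ĉ_e(x) = E[c_e(1 + Poisson(x))]` and demands `d`. -/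
theorem stmt18 {E T : Type*} [Fintype E] [Fintype T]
    (strat : T → Finset (Finset E))
    (c : E → ℕ → ℝ) (hcmono : ∀ e, Monotone (c e)) (hcpos : ∀ e k, 0 ≤ c e k)
    (d : T → ℝ) (hd : ∀ t, 0 < d t)
    (α : ℝ) (hα : ∑ t, d t < α)
    (hmom : ∀ e, Summable fun k =>
      |c e (k + 3) - 2 * c e (k + 2) + c e (k + 1)| * poiPMF α k)
    (σt : T → Finset E → ℝ) (hσ0 : ∀ t s, 0 ≤ σt t s)
    (hσsupp : ∀ t s, s ∉ strat t → σt t s = 0)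
    (hσ1 : ∀ t, ∑ s ∈ strat t, σt t s = 1) :
    (∀ t, ∀ s ∈ strat t, ∀ s' ∈ strat t, 0 < σt t s →
      poiExpCost strat c (fun t' s' => d t' * σt t' s') s ≤
        poiExpCost strat c (fun t' s' => d t' * σt t' s') s') ↔
    IsWE strat (fun e => chat (c e)) d (fun t s => d t * σt t s)
      (fun e => ∑ t, ∑ s ∈ strat t, if e ∈ s then d t * σt t s else 0) :=
  stmt18_general strat c d hd α hα hmom σt hσ0 hσsupp hσ1
end
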